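/- arXiv:2602.01601 — 7 statements merged into one kernel-verified Lean document; each statement's English description precedes it below -/
import Mathlib

section
/- Let n ≥ 2 be an integer. Let (R_1,Z_1),…,(R_n,Z_n) be i.i.d. copies of a pair (R,Z) of square-integrable real random variables satisfying Cov(R_k, Z_j) = 0 for all j,k and Cov(R_k R_{k'}, Z_j Z_{j'}) = 0 for all j,j',k,k'. Suppose R takes values in {−1, 1} with P(R = 1) = p, and write σ_Z² = Var(Z). Define the Dr. GRPO estimator G = (1/n) Σ_{j=1}^n (R_j − (1/n) Σ_{k=1}^n R_k) Z_j. Then Var(G) = ((n−1)/n²) · 4 σ_Z² p (1−p). -/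
/-!
Write `G = n⁻¹ ∑ⱼ ∑ₖ Cⱼₖ Rₖ Zⱼ` with `C = I - J / n` the centering matrix, whose rows and
columns sum to zero. The uncorrelation hypotheses factor the moments of `G`:
`E[Rₖ Zⱼ] = E R · E Z`, and, by independence and identical distribution of the pairs,
`E[Rₖ Rₖ' Zⱼ Zⱼ'] = (a² + v δₖₖ') (b² + t δⱼⱼ')` with `a, b` the means and `v, t` the variances.
The zero row and column sums of `C` kill every term of `E[G²]` except `v t ∑ Cⱼₖ² = v t (n - 1)`,
and `E G = 0`, so `Var G = (n - 1) / n² · Var R · Var Z`. For `R = ±1`, `Var R = 4 p (1 - p)`.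
-/

open MeasureTheory ProbabilityTheory Finset

noncomputable def covar {Ω : Type*} [MeasurableSpace Ω] (μ : Measure Ω) (X Y : Ω → ℝ) : ℝ :=
  (∫ ω, X ω * Y ω ∂μ) - (∫ ω, X ω ∂μ) * (∫ ω, Y ω ∂μ)

open scoped ENNReal

lemma sum_sum_mul_mul_add_ite {ι α : Type*} [Fintype ι] [DecidableEq ι] [CommSemiring α]
    (x y : ι → α) (c d : α) :
    ∑ i, ∑ i', x i * y i' * (c + if i = i' then d else 0)
      = c * (∑ i, x i) * (∑ i, y i) + d * ∑ i, x i * y i := by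
  simp only [mul_add, mul_ite, mul_zero, sum_add_distrib, sum_ite_eq, mem_univ, if_true,
    ← sum_mul, ← mul_sum]
  ring

lemma sum_mul_moments_of_row_col_sum_eq_zero {ι κ : Type*} [Fintype ι] [Fintype κ]
    [DecidableEq ι] [DecidableEq κ] (w : ι → κ → ℝ) (hrow : ∀ j, ∑ k, w j k = 0)
    (hcol : ∀ k, ∑ j, w j k = 0) (a v b t : ℝ) :
    ∑ j, ∑ j', ∑ k, ∑ k', w j k * w j' k'
        * ((a + if k = k' then v else 0) * (b + if j = j' then t else 0))
      = v * t * ∑ j, ∑ k, w j k ^ 2 := by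
  have hinner : ∀ j j', ∑ k, ∑ k', w j k * w j' k'
      * ((a + if k = k' then v else 0) * (b + if j = j' then t else 0))
      = v * (∑ k, w j k * w j' k) * (b + if j = j' then t else 0) := by
    intro j j'
    simp only [← mul_assoc, ← sum_mul, sum_sum_mul_mul_add_ite, hrow, mul_zero, zero_add]
  simp only [hinner]
  calc _ = v * ∑ k, ∑ j, ∑ j', w j k * w j' k * (b + if j = j' then t else 0) := by
          simp only [mul_sum, sum_mul, mul_assoc]
          rw [sum_comm_cycle]
      _ = v * t * ∑ k, ∑ j, w j k ^ 2 := by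
          simp only [sum_sum_mul_mul_add_ite, hcol, mul_zero, zero_add]
          simp only [mul_sum, sq, mul_assoc]
      _ = v * t * ∑ j, ∑ k, w j k ^ 2 := by rw [sum_comm]

noncomputable def centering (n : ℕ) (j k : Fin n) : ℝ := (if j = k then 1 else 0) - 1 / n

lemma sum_centering_right {n : ℕ} (j : Fin n) : ∑ k, centering n j k = 0 := by
  have : (n : ℝ) ≠ 0 := by exact_mod_cast (Fin.pos j).ne'
  simp [centering, sum_sub_distrib, this]

lemma sum_centering_left {n : ℕ} (k : Fin n) : ∑ j, centering n j k = 0 := by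
  have : (n : ℝ) ≠ 0 := by exact_mod_cast (Fin.pos k).ne'
  simp [centering, sum_sub_distrib, this]

lemma sum_sum_centering_sq {n : ℕ} (hn : n ≠ 0) :
    ∑ j, ∑ k, centering n j k ^ 2 = n - 1 := by
  have : (n : ℝ) ≠ 0 := by exact_mod_cast hn
  simp only [centering, sub_sq, ite_pow, one_pow, mul_ite, ite_mul, mul_one, mul_zero, zero_mul,
    zero_pow two_ne_zero, sum_add_distrib, sum_sub_distrib, sum_ite_eq, mem_univ, if_true,
    sum_const, card_univ, Fintype.card_fin, nsmul_eq_mul]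
  field_simp
  ring

section Moments

variable {Ω : Type*} [MeasurableSpace Ω] {μ : Measure Ω}

lemma integral_sum_sum_mul {ι κ : Type*} [Fintype ι] [Fintype κ] (w : ι → κ → ℝ)
    {X : κ → Ω → ℝ} {Y : ι → Ω → ℝ} (hXY : ∀ k j, Integrable (fun ω => X k ω * Y j ω) μ) :
    ∫ ω, ∑ j, ∑ k, w j k * (X k ω * Y j ω) ∂μ = ∑ j, ∑ k, w j k * ∫ ω, X k ω * Y j ω ∂μ := by
  simp (disch := intros; fun_prop) only [integral_finsetSum, integral_const_mul]

lemma integral_sq_sum_sum_mul {ι κ : Type*} [Fintype ι] [Fintype κ] (w : ι → κ → ℝ)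
    {X : κ → Ω → ℝ} {Y : ι → Ω → ℝ}
    (hXY : ∀ k k' j j', Integrable (fun ω => X k ω * X k' ω * (Y j ω * Y j' ω)) μ) :
    ∫ ω, (∑ j, ∑ k, w j k * (X k ω * Y j ω)) ^ 2 ∂μ
      = ∑ j, ∑ j', ∑ k, ∑ k', w j k * w j' k' * ∫ ω, X k ω * X k' ω * (Y j ω * Y j' ω) ∂μ := by
  have hexpand : ∀ ω, (∑ j, ∑ k, w j k * (X k ω * Y j ω)) ^ 2
      = ∑ j, ∑ j', ∑ k, ∑ k', w j k * w j' k' * (X k ω * X k' ω * (Y j ω * Y j' ω)) := by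
    intro ω
    simp only [sq, sum_mul_sum]
    refine sum_congr rfl fun j _ => sum_congr rfl fun j' _ =>
      sum_congr rfl fun k _ => sum_congr rfl fun k' _ => ?_
    ring
  simp only [hexpand]
  simp (disch := intros; fun_prop) only [integral_finsetSum, integral_const_mul]

lemma integral_mul_eq_mul_of_covar_eq_zero {X Y : Ω → ℝ} (h : covar μ X Y = 0) :
    ∫ ω, X ω * Y ω ∂μ = (∫ ω, X ω ∂μ) * ∫ ω, Y ω ∂μ :=
  sub_eq_zero.mp h

variable [IsProbabilityMeasure μ]

lemma integral_mul_of_identDistrib_of_iIndepFun {ι : Type*} [DecidableEq ι]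
    {X : ι → Ω → ℝ} {X₀ : Ω → ℝ} (hX₀ : MemLp X₀ 2 μ) (hid : ∀ i, IdentDistrib (X i) X₀ μ μ)
    (hind : iIndepFun X μ) (i j : ι) :
    ∫ ω, X i ω * X j ω ∂μ = μ[X₀] ^ 2 + if i = j then Var[X₀; μ] else 0 := by
  split_ifs with hij
  · subst hij
    have hsq : ∫ ω, X i ω ^ 2 ∂μ = ∫ ω, X₀ ω ^ 2 ∂μ :=
      ((hid i).comp (measurable_id.pow_const 2)).integral_eq
    simp only [← sq, hsq, variance_eq_sub hX₀, Pi.pow_apply]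
    ring
  · have hmeas : ∀ i, AEStronglyMeasurable (X i) μ := fun i => ((hid i).symm.memLp_snd hX₀).1
    rw [(hind.indepFun hij).integral_fun_mul_eq_mul_integral (hmeas i) (hmeas j),
      (hid i).integral_eq, (hid j).integral_eq]
    ring

lemma variance_eq_of_forall_eq_one_or_eq_neg_one {R : Ω → ℝ} (hR : MemLp R 2 μ)
    (hRval : ∀ ω, R ω = 1 ∨ R ω = -1) :
    Var[R; μ] = 4 * μ.real {ω | R ω = 1} * (1 - μ.real {ω | R ω = 1}) := by
  have hind : R = fun ω => 2 * {ω | R ω = 1}.indicator 1 ω - 1 := by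
    funext ω
    rcases hRval ω with h | h <;> norm_num [Set.indicator_apply, h]
  have hsq : R ^ 2 = 1 := by
    funext ω
    rcases hRval ω with h | h <;> simp [h]
  have hnull : NullMeasurableSet {ω | R ω = 1} μ :=
    hR.aemeasurable.nullMeasurable (measurableSet_singleton 1)
  have hmean : μ[R] = 2 * μ.real {ω | R ω = 1} - 1 := by
    conv_lhs => rw [hind]
    rw [integral_sub (((integrable_const 1).indicator₀ hnull).const_mul 2) (integrable_const 1),
      integral_const_mul, integral_indicator₀ hnull]
    simp
  rw [variance_eq_sub hR, hsq, hmean]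
  simp only [Pi.one_apply, integral_const, probReal_univ, smul_eq_mul, mul_one]
  ring

end Moments

noncomputable def drGRPO {Ω : Type*} (n : ℕ) (Rv Zv : Fin n → Ω → ℝ) (ω : Ω) : ℝ :=
  (1 / (n : ℝ)) * ∑ j, (Rv j ω - (1 / (n : ℝ)) * ∑ k, Rv k ω) * Zv j ω

lemma drGRPO_eq_sum_centering {Ω : Type*} {n : ℕ} (Rv Zv : Fin n → Ω → ℝ) :
    drGRPO n Rv Zv = fun ω => 1 / n * ∑ j, ∑ k, centering n j k * (Rv k ω * Zv j ω) := by
  funext ω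
  simp only [drGRPO, centering, sub_mul, sum_sub_distrib, ite_mul, one_mul, zero_mul,
    sum_ite_eq, mem_univ, if_true, mul_sum, sum_mul]
  ring_nf

theorem variance_drGRPO {Ω : Type*} [MeasurableSpace Ω] {μ : Measure Ω}
    [IsProbabilityMeasure μ]
    {n : ℕ} (hn : n ≠ 0) {R Z : Ω → ℝ} {Rv Zv : Fin n → Ω → ℝ}
    (hR : MemLp R ∞ μ) (hZ : MemLp Z 2 μ)
    (hident : ∀ i, IdentDistrib (fun ω => (Rv i ω, Zv i ω)) (fun ω => (R ω, Z ω)) μ μ)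
    (hindep : iIndepFun (fun i ω => (Rv i ω, Zv i ω)) μ)
    (hcov1 : ∀ j k, covar μ (Rv k) (Zv j) = 0)
    (hcov2 : ∀ j j' k k', covar μ (fun ω => Rv k ω * Rv k' ω) (fun ω => Zv j ω * Zv j' ω) = 0) :
    Var[drGRPO n Rv Zv; μ] = (n - 1) / n ^ 2 * (Var[R; μ] * Var[Z; μ]) := by
  have hRid : ∀ k, IdentDistrib (Rv k) R μ μ := fun k => (hident k).comp measurable_fst
  have hZid : ∀ j, IdentDistrib (Zv j) Z μ μ := fun j => (hident j).comp measurable_snd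
  have hRv : ∀ k, MemLp (Rv k) ∞ μ := fun k => (hRid k).symm.memLp_snd hR
  have hZv : ∀ j, MemLp (Zv j) 2 μ := fun j => (hZid j).symm.memLp_snd hZ
  have hRR := integral_mul_of_identDistrib_of_iIndepFun (hR.mono_exponent le_top) hRid
    (hindep.comp (fun _ => Prod.fst) fun _ => measurable_fst)
  have hZZ := integral_mul_of_identDistrib_of_iIndepFun hZ hZid
    (hindep.comp (fun _ => Prod.snd) fun _ => measurable_snd)
  set H := fun ω => ∑ j, ∑ k, centering n j k * (Rv k ω * Zv j ω)
  have hmean : μ[H] = 0 := by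
    rw [integral_sum_sum_mul _ fun k j =>
      ((hZv j).integrable one_le_two).mul_of_top_right (hRv k)]
    simp only [integral_mul_eq_mul_of_covar_eq_zero (hcov1 _ _), (hRid _).integral_eq,
      (hZid _).integral_eq, ← sum_mul, sum_centering_right, zero_mul, sum_const_zero]
  have hsecond : ∫ ω, H ω ^ 2 ∂μ = (n - 1) * (Var[R; μ] * Var[Z; μ]) := by
    rw [integral_sq_sum_sum_mul _ fun k k' j j' =>
      ((hZv j).integrable_mul (hZv j')).mul_of_top_right ((hRv k').mul (hRv k))]
    simp only [integral_mul_eq_mul_of_covar_eq_zero (hcov2 _ _ _ _), hRR, hZZ]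
    rw [sum_mul_moments_of_row_col_sum_eq_zero _ sum_centering_right sum_centering_left,
      sum_sum_centering_sq hn]
    ring
  have hHmeas : AEMeasurable H μ := by
    have := fun k => (hRv k).aemeasurable
    have := fun j => (hZv j).aemeasurable
    fun_prop
  rw [drGRPO_eq_sum_centering, variance_const_mul, variance_of_integral_eq_zero hHmeas hmean,
    hsecond]
  ring

/-- **Dr. GRPO gradient variance (binary reward).** -/
theorem drgrpo_variance_binary
    {Ω : Type*} [MeasurableSpace Ω] (μ : Measure Ω) [IsProbabilityMeasure μ]
    (n : ℕ) (hn : 2 ≤ n)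
    (R Z : Ω → ℝ) (Rv Zv : Fin n → Ω → ℝ)
    (hR2 : MemLp R 2 μ) (hZ2 : MemLp Z 2 μ)
    (hident : ∀ i, IdentDistrib (fun ω => (Rv i ω, Zv i ω)) (fun ω => (R ω, Z ω)) μ μ)
    (hindep : iIndepFun (fun i ω => (Rv i ω, Zv i ω)) μ)
    (hcov1 : ∀ j k, covar μ (Rv k) (Zv j) = 0)
    (hcov2 : ∀ j j' k k', covar μ (fun ω => Rv k ω * Rv k' ω)
      (fun ω => Zv j ω * Zv j' ω) = 0)
    (p : ℝ) (hRval : ∀ ω, R ω = 1 ∨ R ω = -1)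
    (hp : (μ {ω | R ω = 1}).toReal = p) :
    variance (fun ω =>
        (1 / (n : ℝ)) * ∑ j, (Rv j ω - (1 / (n : ℝ)) * ∑ k, Rv k ω) * Zv j ω) μ
      = ((n : ℝ) - 1) / (n : ℝ) ^ 2 * (4 * variance Z μ * p * (1 - p)) := by
  have hRbdd : MemLp R ∞ μ :=
    memLp_top_of_bound hR2.1 1 (ae_of_all _ fun ω => by rcases hRval ω with h | h <;> simp [h])
  change Var[drGRPO n Rv Zv; μ] = _
  rw [variance_drGRPO (by omega) hRbdd hZ2 hident hindep hcov1 hcov2,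
    variance_eq_of_forall_eq_one_or_eq_neg_one hR2 hRval, measureReal_def, hp]
  ring
end

section
/- Let n ≥ 2 be an integer. Let (R_1,Z_1),…,(R_n,Z_n) be i.i.d. copies of a pair (R,Z) of square-integrable real random variables satisfying Cov(R_k, Z_j) = 0 for all j,k and Cov(R_k R_{k'}, Z_j Z_{j'}) = 0 for all j,j',k,k'. Suppose R takes values in {−1, 1} with P(R = 1) = p, and write σ_Z² = Var(Z). Define the RLOO estimator G = (1/n) Σ_{j=1}^n (R_j − (1/(n−1)) Σ_{k≠j} R_k) Z_j. Then Var(G) = (1/(n−1)) · 4 σ_Z² p (1−p). -/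
open MeasureTheory ProbabilityTheory Finset

/-!
Write the estimator as `G = ∑ j, ∑ k, w j k * (R k * Z j)`, where the RLOO weights
`w j k = (δ j k - (1 - δ j k) / (n - 1)) / n` have all row and column sums equal to zero.
Independence, identical distribution and the two uncorrelation hypotheses give, with
`a = E R` and `m = E Z`,
`Cov (R k * Z j, R k' * Z j') = (a² + δ k k' Var R) (m² + δ j j' Var Z) - a² m²`.
Summed against `w ⊗ w`, every term carrying one of the constants `a²`, `m²` is a product of
margins of `w` and vanishes, leaving `Var R * Var Z * ∑ w j k ² = Var R * Var Z / (n - 1)`.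
Finally `Var R = 4 p (1 - p)` for a `±1`-valued `R`.
-/

theorem sum_weight_mul_kernel_of_zero_margins {ι κ : Type*} [Fintype ι] [Fintype κ]
    [DecidableEq ι] [DecidableEq κ] {w : ι → κ → ℝ}
    (hrow : ∀ j, ∑ k, w j k = 0) (hcol : ∀ k, ∑ j, w j k = 0) (α β γ σ : ℝ) :
    ∑ j, ∑ j', ∑ k, ∑ k', w j k * (w j' k' *
      ((α + if k = k' then β else 0) * (γ + if j = j' then σ else 0) - α * γ))
      = β * σ * ∑ j, ∑ k, w j k ^ 2 := by
  have hexpand : ∀ j j' k k', w j k * (w j' k' *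
      ((α + if k = k' then β else 0) * (γ + if j = j' then σ else 0) - α * γ))
      = α * σ * (if j = j' then w j k * w j' k' else 0)
        + β * γ * (if k = k' then w j k * w j' k' else 0)
        + β * σ * (if j = j' then if k = k' then w j k * w j' k' else 0 else 0) := by
    intro j j' k k'
    split_ifs <;> ring
  have hcol_sq : ∑ j, ∑ j', ∑ k, w j k * w j' k = 0 :=
    calc ∑ j, ∑ j', ∑ k, w j k * w j' k = ∑ k, (∑ j, w j k) * ∑ j', w j' k := by
          simp only [sum_mul_sum]
          exact (sum_congr rfl fun _ _ => sum_comm).trans sum_comm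
      _ = 0 := by simp only [hcol, zero_mul, sum_const_zero]
  simp only [hexpand, sum_add_distrib, ← mul_sum, sum_ite_irrel, sum_const_zero, sum_ite_eq,
    mem_univ, if_true, hrow, mul_zero, zero_add, hcol_sq, sq]

section Probability

variable {Ω : Type*} [MeasurableSpace Ω] {μ : Measure Ω}

theorem variance_sum_sum_eq_of_zero_margins [IsFiniteMeasure μ] {ι κ : Type*} [Fintype ι]
    [Fintype κ] [DecidableEq ι] [DecidableEq κ] {w : ι → κ → ℝ}
    (hrow : ∀ j, ∑ k, w j k = 0) (hcol : ∀ k, ∑ j, w j k = 0) {V : ι → κ → Ω → ℝ}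
    (hV : ∀ j k, MemLp (V j k) 2 μ) {α β γ σ : ℝ}
    (hcov : ∀ j k j' k', cov[V j k, V j' k'; μ]
      = (α + if k = k' then β else 0) * (γ + if j = j' then σ else 0) - α * γ) :
    Var[fun ω => ∑ j, ∑ k, w j k * V j k ω; μ] = β * σ * ∑ j, ∑ k, w j k ^ 2 := by
  have hterm : ∀ j k, MemLp (fun ω => w j k * V j k ω) 2 μ := fun j k => (hV j k).const_mul _
  rw [variance_fun_sum fun j => memLp_finsetSum _ fun k _ => hterm j k]
  simp only [covariance_fun_sum_fun_sum (hterm _) (hterm _)]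
  simp only [covariance_const_mul_left]
  simp only [covariance_const_mul_right, hcov]
  exact sum_weight_mul_kernel_of_zero_margins hrow hcol α β γ σ

theorem covariance_mul_mul_of_covar_eq_zero [IsProbabilityMeasure μ] {ι : Type*}
    {X Y : ι → Ω → ℝ} (hXY : ∀ j k, MemLp (fun ω => X k ω * Y j ω) 2 μ)
    (hcov1 : ∀ j k, covar μ (X k) (Y j) = 0)
    (hcov2 : ∀ j j' k k', covar μ (fun ω => X k ω * X k' ω) (fun ω => Y j ω * Y j' ω) = 0)
    (j k j' k' : ι) :
    cov[fun ω => X k ω * Y j ω, fun ω => X k' ω * Y j' ω; μ]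
      = (∫ ω, X k ω * X k' ω ∂μ) * (∫ ω, Y j ω * Y j' ω ∂μ)
        - (μ[X k] * μ[Y j]) * (μ[X k'] * μ[Y j']) := by
  have hprod : μ[(fun ω => X k ω * Y j ω) * (fun ω => X k' ω * Y j' ω)]
      = (∫ ω, X k ω * X k' ω ∂μ) * ∫ ω, Y j ω * Y j' ω ∂μ := by
    rw [← sub_eq_zero.mp (hcov2 j j' k k')]
    congr 1 with ω
    simp only [Pi.mul_apply]
    ring
  rw [covariance_eq_sub (hXY j k) (hXY j' k'), hprod, sub_eq_zero.mp (hcov1 j k),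
    sub_eq_zero.mp (hcov1 j' k')]

theorem integral_mul_eq_of_iIndepFun_of_identDistrib [IsProbabilityMeasure μ] {ι : Type*}
    [DecidableEq ι] {X : ι → Ω → ℝ} {Y : Ω → ℝ} (hind : iIndepFun X μ)
    (hid : ∀ i, IdentDistrib (X i) Y μ μ) (hY : MemLp Y 2 μ) (i i' : ι) :
    ∫ ω, X i ω * X i' ω ∂μ = μ[Y] ^ 2 + if i = i' then Var[Y; μ] else 0 := by
  by_cases h : i = i'
  · subst h
    have hsq := ((hid i).comp (measurable_id.pow_const 2)).integral_eq
    simp only [Function.comp_def, id] at hsq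
    rw [if_pos rfl, variance_eq_sub hY, add_sub_cancel]
    simpa only [sq, Pi.mul_apply] using hsq
  · have hprod := (hind.indepFun h).integral_mul_eq_mul_integral
      (hid i).aemeasurable_fst.aestronglyMeasurable (hid i').aemeasurable_fst.aestronglyMeasurable
    rw [(hid i).integral_eq, (hid i').integral_eq] at hprod
    rw [if_neg h, add_zero, sq]
    exact hprod

theorem variance_eq_of_eq_one_or_eq_neg_one [IsProbabilityMeasure μ] {R : Ω → ℝ}
    (hR : AEMeasurable R μ) (hval : ∀ ω, R ω = 1 ∨ R ω = -1) :
    Var[R; μ] = 4 * μ.real {ω | R ω = 1} * (1 - μ.real {ω | R ω = 1}) := by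
  set S := {ω | R ω = 1}
  have hS : NullMeasurableSet S μ := nullMeasurableSet_eq_fun hR aemeasurable_const
  have hR_eq : R = fun ω => 2 * S.indicator 1 ω - 1 := by
    funext ω
    rcases hval ω with h | h
    · norm_num [S, h]
    · rw [Set.indicator_of_notMem (by norm_num [S, h])]
      norm_num [h]
  have hR_sq : R ^ 2 = 1 := by
    funext ω
    rcases hval ω with h | h <;> simp [h]
  have hR_mean : μ[R] = 2 * μ.real S - 1 := by
    rw [hR_eq, integral_sub (((integrable_const 1).indicator₀ hS).const_mul 2)
      (integrable_const 1), integral_const_mul, integral_indicator₀ hS]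
    simp
  have hR_L2 : MemLp R 2 μ := by
    refine MemLp.of_bound hR.aestronglyMeasurable 1 (Filter.Eventually.of_forall fun ω => ?_)
    rcases hval ω with h | h <;> simp [h]
  rw [variance_eq_sub hR_L2, hR_sq, hR_mean]
  simp only [Pi.one_apply, integral_const, probReal_univ, smul_eq_mul, mul_one]
  ring

end Probability

noncomputable def rlooWeight (n : ℕ) (j k : Fin n) : ℝ :=
  (if k = j then 1 else -1 / ((n : ℝ) - 1)) / n

section RlooWeight

variable {n : ℕ}

theorem rloo_estimator_eq_sum_rlooWeight (R Z : Fin n → ℝ) :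
    1 / (n : ℝ) * ∑ j, (R j - 1 / ((n : ℝ) - 1) * ∑ k ∈ univ.erase j, R k) * Z j
      = ∑ j, ∑ k, rlooWeight n j k * (R k * Z j) := by
  rw [mul_sum]
  refine sum_congr rfl fun j _ => ?_
  have herase : ∑ k ∈ univ.erase j, rlooWeight n j k * (R k * Z j)
      = -1 / ((n : ℝ) - 1) / n * ∑ k ∈ univ.erase j, R k * Z j := by
    rw [mul_sum]
    exact sum_congr rfl fun k hk => by rw [rlooWeight, if_neg (ne_of_mem_erase hk)]
  rw [← add_sum_erase _ _ (mem_univ j), herase, rlooWeight, if_pos rfl, ← sum_mul]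
  ring

theorem rlooWeight_eq (hn : 2 ≤ n) (j k : Fin n) :
    rlooWeight n j k = (if j = k then 1 / ((n : ℝ) - 1) else 0) - 1 / (n * ((n : ℝ) - 1)) := by
  have hn1 : (n : ℝ) - 1 ≠ 0 := sub_ne_zero.mpr (Nat.cast_ne_one.mpr (by omega))
  have hn0 : (n : ℝ) ≠ 0 := by positivity
  rw [rlooWeight]
  by_cases h : j = k
  · rw [if_pos h.symm, if_pos h]
    field_simp
  · rw [if_neg (Ne.symm h), if_neg h]
    field_simp
    ring

theorem sum_rlooWeight_right (hn : 2 ≤ n) (j : Fin n) : ∑ k, rlooWeight n j k = 0 := by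
  have hn1 : (n : ℝ) - 1 ≠ 0 := sub_ne_zero.mpr (Nat.cast_ne_one.mpr (by omega))
  simp only [rlooWeight_eq hn, sum_sub_distrib, sum_ite_eq, mem_univ, if_true, sum_const,
    card_univ, Fintype.card_fin, nsmul_eq_mul]
  field_simp
  ring

theorem sum_rlooWeight_left (hn : 2 ≤ n) (k : Fin n) : ∑ j, rlooWeight n j k = 0 := by
  simpa only [rlooWeight, eq_comm] using sum_rlooWeight_right hn k

theorem sum_sum_rlooWeight_sq (hn : 2 ≤ n) :
    ∑ j, ∑ k, rlooWeight n j k ^ 2 = 1 / ((n : ℝ) - 1) := by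
  have hn1 : (n : ℝ) - 1 ≠ 0 := sub_ne_zero.mpr (Nat.cast_ne_one.mpr (by omega))
  have hn0 : (n : ℝ) ≠ 0 := by positivity
  have hsq : ∀ j k : Fin n, rlooWeight n j k ^ 2
      = (if j = k then (1 / ((n : ℝ) - 1)) ^ 2
            - 2 * (1 / ((n : ℝ) - 1)) * (1 / (n * ((n : ℝ) - 1))) else 0)
        + (1 / (n * ((n : ℝ) - 1))) ^ 2 := by
    intro j k
    rw [rlooWeight_eq hn]
    split_ifs <;> ring
  simp only [hsq, sum_add_distrib, sum_ite_eq, mem_univ, if_true, sum_const, card_univ,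
    Fintype.card_fin, nsmul_eq_mul]
  field_simp
  ring

end RlooWeight

/-- **RLOO gradient variance (binary reward).** -/
theorem rloo_variance_binary
    {Ω : Type*} [MeasurableSpace Ω] (μ : Measure Ω) [IsProbabilityMeasure μ]
    (n : ℕ) (hn : 2 ≤ n)
    (R Z : Ω → ℝ) (Rv Zv : Fin n → Ω → ℝ)
    (hR2 : MemLp R 2 μ) (hZ2 : MemLp Z 2 μ)
    (hident : ∀ i, IdentDistrib (fun ω => (Rv i ω, Zv i ω)) (fun ω => (R ω, Z ω)) μ μ)
    (hindep : iIndepFun (fun i ω => (Rv i ω, Zv i ω)) μ)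
    (hcov1 : ∀ j k, covar μ (Rv k) (Zv j) = 0)
    (hcov2 : ∀ j j' k k', covar μ (fun ω => Rv k ω * Rv k' ω)
      (fun ω => Zv j ω * Zv j' ω) = 0)
    (p : ℝ) (hRval : ∀ ω, R ω = 1 ∨ R ω = -1)
    (hp : (μ {ω | R ω = 1}).toReal = p) :
    variance (fun ω =>
        (1 / (n : ℝ)) * ∑ j,
          (Rv j ω - (1 / ((n : ℝ) - 1)) * ∑ k ∈ Finset.univ.erase j, Rv k ω) * Zv j ω) μ
      = 1 / ((n : ℝ) - 1) * (4 * variance Z μ * p * (1 - p)) := by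
  have hidR : ∀ i, IdentDistrib (Rv i) R μ μ := fun i => (hident i).comp measurable_fst
  have hidZ : ∀ i, IdentDistrib (Zv i) Z μ μ := fun i => (hident i).comp measurable_snd
  have hRv_sign : ∀ i, ∀ᵐ ω ∂μ, Rv i ω = 1 ∨ Rv i ω = -1 := fun i =>
    (hidR i).symm.ae_snd ((measurableSet_singleton 1).union (measurableSet_singleton (-1)))
      (ae_of_all _ hRval)
  have hRZ : ∀ j k, MemLp (fun ω => Rv k ω * Zv j ω) 2 μ := by
    intro j k
    refine ((hidZ j).symm.memLp_snd hZ2).of_le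
      ((hidR k).aemeasurable_fst.mul (hidZ j).aemeasurable_fst).aestronglyMeasurable ?_
    filter_upwards [hRv_sign k] with ω hω
    rcases hω with h | h <;> simp [h]
  have hRR := integral_mul_eq_of_iIndepFun_of_identDistrib (X := Rv)
    (hindep.comp (fun _ => Prod.fst) fun _ => measurable_fst) hidR hR2
  have hZZ := integral_mul_eq_of_iIndepFun_of_identDistrib (X := Zv)
    (hindep.comp (fun _ => Prod.snd) fun _ => measurable_snd) hidZ hZ2
  have hcov : ∀ j k j' k', cov[fun ω => Rv k ω * Zv j ω, fun ω => Rv k' ω * Zv j' ω; μ]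
      = (μ[R] ^ 2 + if k = k' then Var[R; μ] else 0)
          * (μ[Z] ^ 2 + if j = j' then Var[Z; μ] else 0) - μ[R] ^ 2 * μ[Z] ^ 2 := by
    intro j k j' k'
    rw [covariance_mul_mul_of_covar_eq_zero hRZ hcov1 hcov2, hRR, hZZ, (hidR k).integral_eq,
      (hidR k').integral_eq, (hidZ j).integral_eq, (hidZ j').integral_eq]
    ring
  simp only [rloo_estimator_eq_sum_rlooWeight]
  rw [variance_sum_sum_eq_of_zero_margins (sum_rlooWeight_right hn) (sum_rlooWeight_left hn)
      hRZ hcov, sum_sum_rlooWeight_sq hn,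
    variance_eq_of_eq_one_or_eq_neg_one hR2.aemeasurable hRval, measureReal_def, hp]
  ring
end

section
/- Fix an integer B ≥ 1, reals L and U with 3 ≤ L < U, positive reals a_1,…,a_B, and a budget C with B·L ≤ C ≤ B·U. For each q and each λ ∈ ℝ, define n_q⋆(λ) = U if λ ≤ a_q (U−2)/U³; n_q⋆(λ) = the unique n ∈ (L,U) solving λ = a_q (n−2)/n³ if a_q (U−2)/U³ < λ < a_q (L−2)/L³; and n_q⋆(λ) = L if λ ≥ a_q (L−2)/L³. Then there exists λ⋆ ∈ ℝ with Σ_{q=1}^B n_q⋆(λ⋆) = C, and the vector (n_q⋆(λ⋆))_{q=1}^B is a minimizer of Σ_{q=1}^B a_q (n_q − 1)/n_q² over all real vectors (n_1,…,n_B) with Σ_q n_q = C and L ≤ n_q ≤ U for every q. -/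
open Finset

lemma drgrpo_aux_anti {a x y : ℝ} (ha : 0 < a) (hx : 3 ≤ x) (hxy : x < y) :
    a * (y - 2) / y ^ 3 < a * (x - 2) / x ^ 3 := by
  have hx0 : 0 < x := by linarith
  have hy0 : 0 < y := by linarith
  rw [div_lt_div_iff₀ (by positivity) (by positivity)]
  have hbr : 0 < x ^ 2 * (y - 2) + y ^ 2 * (x - 2) - 2 * x * y := by
    nlinarith [mul_pos (pow_pos hx0 2) (show (0:ℝ) < y - 3 by linarith),
      mul_nonneg (pow_nonneg hy0.le 2) (show (0:ℝ) ≤ x - 3 by linarith), sq_nonneg (x - y)]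
  nlinarith [mul_pos ha (mul_pos (sub_pos.2 hxy) hbr)]

lemma drgrpo_aux_convex {a m n : ℝ} (ha : 0 < a) (hm : 3 ≤ m) (hn : 3 ≤ n) :
    a * (m - 1) / m ^ 2 - a * (n - 1) / n ^ 2 ≥ -(a * (n - 2) / n ^ 3) * (m - n) := by
  have hm0 : 0 < m := by linarith
  have hn0 : 0 < n := by linarith
  have key : a * (m - 1) / m ^ 2 - a * (n - 1) / n ^ 2 + (a * (n - 2) / n ^ 3) * (m - n)
      = a * ((m - n) ^ 2 * ((n - 2) * m - n)) / (m ^ 2 * n ^ 3) := by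
    field_simp
    ring
  have h2 : 0 ≤ a * ((m - n) ^ 2 * ((n - 2) * m - n)) / (m ^ 2 * n ^ 3) := by
    apply div_nonneg _ (by positivity)
    apply mul_nonneg ha.le
    apply mul_nonneg (sq_nonneg _)
    nlinarith
  linarith

/-- **Continuous allocation for Dr. GRPO** (Theorem 5.1): there is a multiplier `λ⋆`
at which the waterfilling solution meets the budget and minimizes the total variance. -/
theorem drgrpo_continuous_allocation (B : ℕ) (hB : 1 ≤ B) (L U : ℝ)
    (hL : 3 ≤ L) (hLU : L < U)
    (a : Fin B → ℝ) (ha : ∀ q, 0 < a q) (C : ℝ)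
    (hC1 : (B : ℝ) * L ≤ C) (hC2 : C ≤ (B : ℝ) * U)
    (nstar : Fin B → ℝ → ℝ)
    (hUpper : ∀ q lam, lam ≤ a q * (U - 2) / U ^ 3 → nstar q lam = U)
    (hMid : ∀ q lam, a q * (U - 2) / U ^ 3 < lam → lam < a q * (L - 2) / L ^ 3 →
      nstar q lam ∈ Set.Ioo L U ∧ lam = a q * (nstar q lam - 2) / (nstar q lam) ^ 3)
    (hLower : ∀ q lam, a q * (L - 2) / L ^ 3 ≤ lam → nstar q lam = L) :
    ∃ lamStar : ℝ, (∑ q, nstar q lamStar) = C ∧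
      ∀ m : Fin B → ℝ, (∑ q, m q) = C → (∀ q, L ≤ m q ∧ m q ≤ U) →
        (∑ q, a q * (nstar q lamStar - 1) / (nstar q lamStar) ^ 2)
          ≤ ∑ q, a q * (m q - 1) / (m q) ^ 2 := by
  -- membership
  have hmem : ∀ q lam, L ≤ nstar q lam ∧ nstar q lam ≤ U := by
    intro q lam
    rcases le_or_gt lam (a q * (U - 2) / U ^ 3) with h | h
    · rw [hUpper q lam h]; exact ⟨hLU.le, le_refl U⟩
    rcases le_or_gt (a q * (L - 2) / L ^ 3) lam with h' | h'
    · rw [hLower q lam h']; exact ⟨le_refl L, hLU.le⟩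
    · obtain ⟨⟨h1, h2⟩, _⟩ := hMid q lam h h'; exact ⟨h1.le, h2.le⟩
  -- antitone
  have hanti : ∀ q, Antitone (nstar q) := by
    intro q l1 l2 hle
    rcases le_or_gt l1 (a q * (U - 2) / U ^ 3) with h1 | h1
    · rw [hUpper q l1 h1]; exact (hmem q l2).2
    rcases le_or_gt (a q * (L - 2) / L ^ 3) l2 with h2 | h2
    · rw [hLower q l2 h2]; exact (hmem q l1).1
    have h1' : l1 < a q * (L - 2) / L ^ 3 := lt_of_le_of_lt hle h2
    have h2' : a q * (U - 2) / U ^ 3 < l2 := lt_of_lt_of_le h1 hle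
    obtain ⟨⟨m1L, m1U⟩, e1⟩ := hMid q l1 h1 h1'
    obtain ⟨⟨m2L, m2U⟩, e2⟩ := hMid q l2 h2' h2
    by_contra hcon
    push_neg at hcon
    have := drgrpo_aux_anti (ha q) (le_trans hL m1L.le) hcon
    rw [← e1, ← e2] at this
    linarith
  -- surjectivity onto [L,U]
  have hsurj : ∀ q, ∀ y, L ≤ y → y ≤ U → ∃ lam, nstar q lam = y := by
    intro q y hyL hyU
    rcases eq_or_lt_of_le hyU with heqU | hyU'
    · exact ⟨a q * (U - 2) / U ^ 3, (hUpper q _ le_rfl).trans heqU.symm⟩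
    rcases eq_or_lt_of_le hyL with heqL | hyL'
    · exact ⟨a q * (L - 2) / L ^ 3, (hLower q _ le_rfl).trans heqL⟩
    · refine ⟨a q * (y - 2) / y ^ 3, ?_⟩
      have hU' : a q * (U - 2) / U ^ 3 < a q * (y - 2) / y ^ 3 :=
        drgrpo_aux_anti (ha q) (le_trans hL hyL'.le) hyU'
      have hL' : a q * (y - 2) / y ^ 3 < a q * (L - 2) / L ^ 3 :=
        drgrpo_aux_anti (ha q) hL hyL'
      obtain ⟨⟨mL, mU⟩, e⟩ := hMid q _ hU' hL'
      rcases lt_trichotomy (nstar q (a q * (y - 2) / y ^ 3)) y with hlt | heq | hgt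
      · have := drgrpo_aux_anti (ha q) (le_trans hL mL.le) hlt
        rw [← e] at this; linarith
      · exact heq
      · have := drgrpo_aux_anti (ha q) (le_trans hL hyL'.le) hgt
        rw [← e] at this; linarith
  -- continuity
  have hcont : ∀ q, Continuous (nstar q) := by
    intro q
    have hmono : Monotone (fun t : ℝ => nstar q (-t)) :=
      fun x y hxy => hanti q (neg_le_neg hxy)
    have hF : Continuous (fun t : ℝ => nstar q (-t)) := by
      rw [continuous_iff_continuousAt]
      intro t
      obtain ⟨hnL, hnU⟩ := hmem q (-t)
      apply continuousAt_iff_continuous_left_right.2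
      constructor
      · rcases eq_or_lt_of_le hnL with heq | hlt
        · refine (continuousWithinAt_const : ContinuousWithinAt (fun _ => L) _ _).congr ?_ heq.symm
          intro y hy
          have h1 : nstar q (-y) ≤ nstar q (-t) := hmono hy
          have h2 : L ≤ nstar q (-y) := (hmem q (-y)).1
          show nstar q (-y) = L
          linarith [heq.le, heq.ge]
        · apply continuousWithinAt_left_of_monotoneOn_of_exists_between
            (hmono.monotoneOn _) Filter.univ_mem
          intro b hb
          have hmax : max b L < nstar q (-t) := max_lt hb hlt
          obtain ⟨y, hy1, hy2⟩ := exists_between hmax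
          obtain ⟨lam, hlam⟩ := hsurj q y ((le_max_right b L).trans hy1.le)
            (hy2.le.trans hnU)
          refine ⟨-lam, trivial, ?_⟩
          simp only [neg_neg, hlam]
          exact ⟨(le_max_left b L).trans_lt hy1, hy2⟩
      · rcases eq_or_lt_of_le hnU with heq | hlt
        · refine (continuousWithinAt_const : ContinuousWithinAt (fun _ => U) _ _).congr ?_ heq
          intro y hy
          have h1 : nstar q (-t) ≤ nstar q (-y) := hmono hy
          have h2 : nstar q (-y) ≤ U := (hmem q (-y)).2
          show nstar q (-y) = U
          linarith [heq.le, heq.ge]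
        · apply continuousWithinAt_right_of_monotoneOn_of_exists_between
            (hmono.monotoneOn _) Filter.univ_mem
          intro b hb
          have hmin : nstar q (-t) < min b U := lt_min hb hlt
          obtain ⟨y, hy1, hy2⟩ := exists_between hmin
          obtain ⟨lam, hlam⟩ := hsurj q y (hnL.trans hy1.le)
            ((min_le_right b U).trans' hy2.le)
          refine ⟨-lam, trivial, ?_⟩
          simp only [neg_neg, hlam]
          exact ⟨hy1, hy2.trans_le (min_le_left b U)⟩
    have heq : nstar q = (fun t : ℝ => nstar q (-t)) ∘ (fun t : ℝ => -t) := by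
      funext t; simp
    rw [heq]
    exact hF.comp continuous_neg
  -- multiplier range endpoints
  haveI : Nonempty (Fin B) := ⟨⟨0, by omega⟩⟩
  have hne : (univ : Finset (Fin B)).Nonempty := univ_nonempty
  set lam0 := univ.inf' hne (fun q => a q * (U - 2) / U ^ 3) with hlam0
  set lam1 := univ.sup' hne (fun q => a q * (L - 2) / L ^ 3) with hlam1
  have hS0 : (∑ q, nstar q lam0) = (B : ℝ) * U := by
    rw [Finset.sum_congr rfl (fun q _ => hUpper q lam0 (by rw [hlam0]; exact inf'_le (fun q => a q * (U - 2) / U ^ 3) (mem_univ q)))]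
    simp [Finset.card_univ, mul_comm]
  have hS1 : (∑ q, nstar q lam1) = (B : ℝ) * L := by
    rw [Finset.sum_congr rfl (fun q _ => hLower q lam1 (by rw [hlam1]; exact le_sup' (fun q => a q * (L - 2) / L ^ 3) (mem_univ q)))]
    simp [Finset.card_univ, mul_comm]
  have hlam01 : lam0 ≤ lam1 := by
    obtain ⟨q0⟩ := (inferInstance : Nonempty (Fin B))
    calc lam0 ≤ a q0 * (U - 2) / U ^ 3 := by rw [hlam0]; exact inf'_le (fun q => a q * (U - 2) / U ^ 3) (mem_univ q0)
      _ ≤ a q0 * (L - 2) / L ^ 3 := (drgrpo_aux_anti (ha q0) hL hLU).le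
      _ ≤ lam1 := by rw [hlam1]; exact le_sup' (fun q => a q * (L - 2) / L ^ 3) (mem_univ q0)
  have hScont : ContinuousOn (fun lam => ∑ q, nstar q lam) (Set.Icc lam0 lam1) :=
    (continuous_finset_sum univ fun q _ => hcont q).continuousOn
  have hivt := intermediate_value_Icc' hlam01 hScont
  have hCmem : C ∈ Set.Icc ((fun lam => ∑ q, nstar q lam) lam1)
      ((fun lam => ∑ q, nstar q lam) lam0) := by
    constructor
    · simp only [hS1]; exact hC1
    · simp only [hS0]; exact hC2
  obtain ⟨lamStar, _, hsum⟩ := hivt hCmem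
  simp only at hsum
  refine ⟨lamStar, hsum, ?_⟩
  intro m hmC hmB
  have key : ∀ q, a q * (nstar q lamStar - 1) / (nstar q lamStar) ^ 2
      + lamStar * nstar q lamStar ≤ a q * (m q - 1) / (m q) ^ 2 + lamStar * m q := by
    intro q
    obtain ⟨hnL, hnU⟩ := hmem q lamStar
    obtain ⟨hmL, hmU⟩ := hmB q
    have hconv := drgrpo_aux_convex (ha q) (hL.trans hmL) (hL.trans hnL)
    rcases le_or_gt lamStar (a q * (U - 2) / U ^ 3) with h | h
    · have hnU' : nstar q lamStar = U := hUpper q lamStar h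
      have hsign : 0 ≤ (a q * (nstar q lamStar - 2) / (nstar q lamStar) ^ 3 - lamStar)
          * (nstar q lamStar - m q) := by
        apply mul_nonneg
        · rw [hnU']; linarith
        · rw [hnU']; linarith
      nlinarith [hconv, hsign]
    rcases le_or_gt (a q * (L - 2) / L ^ 3) lamStar with h' | h'
    · have hnL' : nstar q lamStar = L := hLower q lamStar h'
      have hsign : 0 ≤ (lamStar - a q * (nstar q lamStar - 2) / (nstar q lamStar) ^ 3)
          * (m q - nstar q lamStar) := by
        apply mul_nonneg
        · rw [hnL']; linarith
        · rw [hnL']; linarith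
      nlinarith [hconv, hsign]
    · obtain ⟨_, e⟩ := hMid q lamStar h h'
      nlinarith [hconv, e]
  have hsumle := Finset.sum_le_sum (fun q (_ : q ∈ univ) => key q)
  rw [Finset.sum_add_distrib, Finset.sum_add_distrib, ← Finset.mul_sum,
    ← Finset.mul_sum, hsum, hmC] at hsumle
  linarith
end

section
/- Fix an integer B ≥ 1, reals L and U with 3 ≤ L < U, positive reals a_1,…,a_B, and a budget C with B·L ≤ C ≤ B·U. For each q and each λ > 0, define n_q⋆(λ) = U if λ ≤ a_q/(U−1)²; n_q⋆(λ) = 1 + √(a_q/λ) if a_q/(U−1)² < λ < a_q/(L−1)²; and n_q⋆(λ) = L if λ ≥ a_q/(L−1)². Then there exists λ⋆ > 0 with Σ_{q=1}^B n_q⋆(λ⋆) = C, and the vector (n_q⋆(λ⋆))_{q=1}^B is the unique minimizer of Σ_{q=1}^B a_q/(n_q − 1) over all real vectors (n_1,…,n_B) with Σ_q n_q = C and L ≤ n_q ≤ U for every q. -/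
/-!
For `λ > 0`, `n⋆(λ)` is `1 + √(a/λ)` clamped to `[L, U]`: it is continuous in `λ`, equal to
`U` near `0` and to `L` for large `λ`, so the intermediate value theorem produces `λ⋆`.
Optimality is Lagrangian duality. Since `n = n⋆(λ)` satisfies the one-variable KKT conditions,
the factorisation
`a/(m-1) + λm - (a/(n-1) + λn) = (m - n)(λ(m-1)(n-1) - a) / ((m-1)(n-1))`
shows that it is the unique minimizer of `x ↦ a/(x-1) + λx` on `[L, U]`. Summing over `q`, the
terms `λ Σ m_q = λ C = λ Σ n_q⋆` cancel.
-/

open Finset Filter Topology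

/-- The RLOO waterfilling allocation as a function of the multiplier `λ`. -/
noncomputable def rlooNstar (a L U lam : ℝ) : ℝ :=
  if lam ≤ a / (U - 1) ^ 2 then U
  else if lam < a / (L - 1) ^ 2 then 1 + Real.sqrt (a / lam)
  else L

section Waterfilling

variable {a L U lam : ℝ}

lemma le_sqrt_div_iff {c : ℝ} (hc : 0 < c) (hlam : 0 < lam) :
    c ≤ √(a / lam) ↔ lam ≤ a / c ^ 2 := by
  rw [Real.le_sqrt' hc, le_div_iff₀ hlam, le_div_iff₀ (by positivity), mul_comm]

lemma sqrt_div_le_iff {c : ℝ} (hc : 0 < c) (hlam : 0 < lam) :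
    √(a / lam) ≤ c ↔ a / c ^ 2 ≤ lam := by
  rw [Real.sqrt_le_left hc.le, div_le_iff₀ hlam, div_le_iff₀ (by positivity), mul_comm]

lemma rlooNstar_eq_max_min (hL : 1 < L) (hLU : L ≤ U) (hlam : 0 < lam) :
    rlooNstar a L U lam = max L (min U (1 + √(a / lam))) := by
  have hU : 0 < U - 1 := by linarith
  have hL1 : 0 < L - 1 := by linarith
  unfold rlooNstar
  split_ifs with hUpper hLower
  · rw [← le_sqrt_div_iff hU hlam] at hUpper
    rw [min_eq_left (by linarith), max_eq_right hLU]
  · rw [← le_sqrt_div_iff hU hlam, not_le] at hUpper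
    rw [← not_le, ← sqrt_div_le_iff hL1 hlam, not_le] at hLower
    rw [min_eq_right (by linarith), max_eq_right (by linarith)]
  · rw [not_lt, ← sqrt_div_le_iff hL1 hlam] at hLower
    rw [min_eq_right (by linarith), max_eq_left (by linarith)]

lemma rlooNstar_mem_Icc (hL : 1 < L) (hLU : L ≤ U) (hlam : 0 < lam) :
    rlooNstar a L U lam ∈ Set.Icc L U := by
  rw [rlooNstar_eq_max_min hL hLU hlam]
  exact ⟨le_max_left _ _, max_le hLU (min_le_left _ _)⟩

lemma continuousOn_rlooNstar (hL : 1 < L) (hLU : L ≤ U) :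
    ContinuousOn (rlooNstar a L U) (Set.Ioi 0) := by
  have : ContinuousOn (fun lam => max L (min U (1 + √(a / lam)))) (Set.Ioi 0) :=
    continuousOn_const.sup <| continuousOn_const.inf <| continuousOn_const.add <|
      (continuousOn_const.div continuousOn_id fun _ hx => ne_of_gt hx).sqrt
  exact this.congr fun _ hlam => rlooNstar_eq_max_min hL hLU hlam

lemma eventually_nhdsGT_zero_rlooNstar_eq (ha : 0 < a) (hU : U ≠ 1) :
    ∀ᶠ lam in 𝓝[>] 0, rlooNstar a L U lam = U := by
  have : 0 < a / (U - 1) ^ 2 := div_pos ha (sq_pos_of_ne_zero (sub_ne_zero.mpr hU))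
  filter_upwards [nhdsWithin_le_nhds (eventually_le_nhds this)] with lam hlam
  exact if_pos hlam

lemma eventually_atTop_rlooNstar_eq :
    ∀ᶠ lam in atTop, rlooNstar a L U lam = L := by
  filter_upwards [eventually_gt_atTop (a / (U - 1) ^ 2),
    eventually_ge_atTop (a / (L - 1) ^ 2)] with lam hU hL
  rw [rlooNstar, if_neg hU.not_ge, if_neg hL.not_gt]

lemma le_mul_sq_rlooNstar_sub_one (hL : 1 < L) (hLU : L ≤ U) (hlam : 0 < lam)
    (hlt : rlooNstar a L U lam < U) : a ≤ lam * (rlooNstar a L U lam - 1) ^ 2 := by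
  have hn := rlooNstar_eq_max_min (a := a) hL hLU hlam
  set n := rlooNstar a L U lam
  have hsn : 1 + √(a / lam) ≤ n := by
    rcases le_total U (1 + √(a / lam)) with h | h
    · rw [hn, min_eq_left h, max_eq_right hLU] at hlt
      exact (lt_irrefl U hlt).elim
    · rw [hn, min_eq_right h]
      exact le_max_right _ _
  have hn1 : 0 < n - 1 := by linarith [le_max_left L (min U (1 + √(a / lam)))]
  rw [← div_le_iff₀' hlam, ← Real.sqrt_le_left hn1.le]
  linarith

lemma mul_sq_rlooNstar_sub_one_le (hL : 1 < L) (hLU : L ≤ U) (hlam : 0 < lam)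
    (hlt : L < rlooNstar a L U lam) : lam * (rlooNstar a L U lam - 1) ^ 2 ≤ a := by
  have hn := rlooNstar_eq_max_min (a := a) hL hLU hlam
  set n := rlooNstar a L U lam
  have hns : n ≤ 1 + √(a / lam) := by
    rcases le_total (min U (1 + √(a / lam))) L with h | h
    · rw [hn, max_eq_left h] at hlt
      exact (lt_irrefl L hlt).elim
    · rw [hn, max_eq_right h]
      exact min_le_right _ _
  rw [← le_div_iff₀' hlam, ← Real.le_sqrt' (by linarith)]
  linarith

end Waterfilling

/-- The hypotheses are the first-order (KKT) conditions for `n` to minimize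
`x ↦ a / (x - 1) + lam * x` on an interval containing `m`. -/
lemma div_sub_one_add_mul_lt_of_kkt {a lam n m : ℝ} (hlam : 0 < lam) (hn : 1 < n) (hm : 1 < m)
    (hup : n < m → a ≤ lam * (n - 1) ^ 2) (hdown : m < n → lam * (n - 1) ^ 2 ≤ a)
    (hmn : m ≠ n) : a / (n - 1) + lam * n < a / (m - 1) + lam * m := by
  have hm1 : m - 1 ≠ 0 := by linarith
  have hn1 : n - 1 ≠ 0 := by linarith
  have key : a / (m - 1) + lam * m - (a / (n - 1) + lam * n)
      = (m - n) * (lam * (m - 1) * (n - 1) - a) / ((m - 1) * (n - 1)) := by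
    field_simp
    ring
  have hnum : 0 < (m - n) * (lam * (m - 1) * (n - 1) - a) := by
    rcases hmn.lt_or_gt with h | h
    · exact mul_pos_of_neg_of_neg (by linarith) <| by
        nlinarith [hdown h, mul_pos (mul_pos hlam (sub_pos.2 h)) (sub_pos.2 hn)]
    · exact mul_pos (by linarith) <| by
        nlinarith [hup h, mul_pos (mul_pos hlam (sub_pos.2 h)) (sub_pos.2 hn)]
  have := div_pos hnum (mul_pos (sub_pos.2 hm) (sub_pos.2 hn))
  linarith

lemma rlooNstar_div_add_mul_lt {a L U lam m : ℝ} (hL : 1 < L) (hLU : L ≤ U) (hlam : 0 < lam)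
    (hm : m ∈ Set.Icc L U) (hne : m ≠ rlooNstar a L U lam) :
    a / (rlooNstar a L U lam - 1) + lam * rlooNstar a L U lam < a / (m - 1) + lam * m :=
  div_sub_one_add_mul_lt_of_kkt hlam (by linarith [(rlooNstar_mem_Icc (a := a) hL hLU hlam).1])
    (by linarith [hm.1]) (fun h => le_mul_sq_rlooNstar_sub_one hL hLU hlam (h.trans_le hm.2))
    (fun h => mul_sq_rlooNstar_sub_one_le hL hLU hlam (hm.1.trans_lt h)) hne

lemma sum_lt_sum_of_add_mul_lt_of_sum_eq {ι : Type*} {s : Finset ι} {f : ι → ℝ → ℝ} {lam : ℝ}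
    {x y : ι → ℝ} (hsum : ∑ i ∈ s, x i = ∑ i ∈ s, y i)
    (hle : ∀ i ∈ s, f i (x i) + lam * x i ≤ f i (y i) + lam * y i)
    (hlt : ∃ i ∈ s, f i (x i) + lam * x i < f i (y i) + lam * y i) :
    ∑ i ∈ s, f i (x i) < ∑ i ∈ s, f i (y i) := by
  have := sum_lt_sum hle hlt
  rw [sum_add_distrib, sum_add_distrib, ← mul_sum, ← mul_sum, hsum] at this
  linarith

theorem sum_div_rlooNstar_sub_one_lt {ι : Type*} [Fintype ι] {a : ι → ℝ} {L U lam : ℝ}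
    (hL : 1 < L) (hLU : L ≤ U) (hlam : 0 < lam) {m : ι → ℝ}
    (hsum : ∑ i, m i = ∑ i, rlooNstar (a i) L U lam) (hm : ∀ i, m i ∈ Set.Icc L U)
    (hne : m ≠ fun i => rlooNstar (a i) L U lam) :
    ∑ i, a i / (rlooNstar (a i) L U lam - 1) < ∑ i, a i / (m i - 1) := by
  obtain ⟨i, hi⟩ := Function.ne_iff.mp hne
  refine sum_lt_sum_of_add_mul_lt_of_sum_eq (f := fun i t => a i / (t - 1)) (lam := lam)
    hsum.symm (fun j _ => ?_)
    ⟨i, mem_univ i, rlooNstar_div_add_mul_lt hL hLU hlam (hm i) hi⟩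
  rcases eq_or_ne (m j) (rlooNstar (a j) L U lam) with h | h
  · rw [h]
  · exact (rlooNstar_div_add_mul_lt hL hLU hlam (hm j) h).le

theorem exists_sum_rlooNstar_eq {ι : Type*} [Fintype ι] {a : ι → ℝ} {L U C : ℝ}
    (ha : ∀ i, 0 < a i) (hL : 1 < L) (hLU : L ≤ U)
    (hC : C ∈ Set.Icc (Fintype.card ι * L) (Fintype.card ι * U)) :
    ∃ lam > 0, ∑ i, rlooNstar (a i) L U lam = C := by
  obtain ⟨lamU, hU, hlamU⟩ := ((eventually_all.2 fun i =>
    eventually_nhdsGT_zero_rlooNstar_eq (L := L) (ha i) (by linarith : U ≠ 1)).and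
      self_mem_nhdsWithin).exists
  obtain ⟨lamL, hL', hlamL⟩ := ((eventually_all.2 fun i =>
    eventually_atTop_rlooNstar_eq (a := a i) (L := L) (U := U)).and
      (eventually_gt_atTop 0)).exists
  have hcont : ContinuousOn (fun lam => ∑ i, rlooNstar (a i) L U lam) (Set.Ioi 0) :=
    continuousOn_finsetSum _ fun i _ => continuousOn_rlooNstar hL hLU
  exact isPreconnected_Ioi.intermediate_value hlamL hlamU hcont (by simpa [hU, hL'] using hC)

theorem rloo_continuous_allocation_general (B : ℕ) (L U : ℝ)
    (hL : 3 ≤ L) (hLU : L < U)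
    (a : Fin B → ℝ) (ha : ∀ q, 0 < a q) (C : ℝ)
    (hC1 : (B : ℝ) * L ≤ C) (hC2 : C ≤ (B : ℝ) * U) :
    ∃ lamStar : ℝ, 0 < lamStar ∧ (∑ q, rlooNstar (a q) L U lamStar) = C ∧
      (∀ m : Fin B → ℝ, (∑ q, m q) = C → (∀ q, L ≤ m q ∧ m q ≤ U) →
        (∑ q, a q / (rlooNstar (a q) L U lamStar - 1)) ≤ ∑ q, a q / (m q - 1)) ∧
      (∀ m : Fin B → ℝ, (∑ q, m q) = C → (∀ q, L ≤ m q ∧ m q ≤ U) →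
        m ≠ (fun q => rlooNstar (a q) L U lamStar) →
        (∑ q, a q / (rlooNstar (a q) L U lamStar - 1)) < ∑ q, a q / (m q - 1)) := by
  have hL1 : 1 < L := by linarith
  obtain ⟨lam, hlam, hsum⟩ :=
    exists_sum_rlooNstar_eq (C := C) ha hL1 hLU.le (by simp [hC1, hC2])
  have hopt := fun (m : Fin B → ℝ) (hmsum : ∑ q, m q = C) hm hne =>
    sum_div_rlooNstar_sub_one_lt hL1 hLU.le hlam (hmsum.trans hsum.symm) hm hne
  refine ⟨lam, hlam, hsum, fun m hmsum hm => ?_, hopt⟩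
  rcases eq_or_ne m (fun q => rlooNstar (a q) L U lam) with rfl | hne
  · exact le_rfl
  · exact (hopt m hmsum hm hne).le

/-- **Continuous allocation for RLOO** (Theorem 5.2): there is a multiplier `λ⋆ > 0`
at which the waterfilling solution meets the budget and is the unique minimizer of
the total variance. -/
theorem rloo_continuous_allocation (B : ℕ) (hB : 1 ≤ B) (L U : ℝ)
    (hL : 3 ≤ L) (hLU : L < U)
    (a : Fin B → ℝ) (ha : ∀ q, 0 < a q) (C : ℝ)
    (hC1 : (B : ℝ) * L ≤ C) (hC2 : C ≤ (B : ℝ) * U) :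
    ∃ lamStar : ℝ, 0 < lamStar ∧ (∑ q, rlooNstar (a q) L U lamStar) = C ∧
      (∀ m : Fin B → ℝ, (∑ q, m q) = C → (∀ q, L ≤ m q ∧ m q ≤ U) →
        (∑ q, a q / (rlooNstar (a q) L U lamStar - 1)) ≤ ∑ q, a q / (m q - 1)) ∧
      (∀ m : Fin B → ℝ, (∑ q, m q) = C → (∀ q, L ≤ m q ∧ m q ≤ U) →
        m ≠ (fun q => rlooNstar (a q) L U lamStar) →
        (∑ q, a q / (rlooNstar (a q) L U lamStar - 1)) < ∑ q, a q / (m q - 1)) :=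
  rloo_continuous_allocation_general B L U hL hLU a ha C hC1 hC2
end

section
/- Let n ≥ 2 be an integer. Let (R_1,Z_1),…,(R_n,Z_n) be i.i.d. copies of a pair (R,Z) of square-integrable real random variables satisfying Cov(R_k, Z_j) = 0 for all j,k and Cov(R_k R_{k'}, Z_j Z_{j'}) = 0 for all j,j',k,k'. Write σ_Z² = Var(Z). Define the Dr. GRPO estimator G = (1/n) Σ_{j=1}^n (R_j − (1/n) Σ_{k=1}^n R_k) Z_j. Then Var(G) = ((n−1)/n²) σ_Z² Var(R). -/
/-!
With the centering matrix `C = I - J/n`, the estimator is `G = n⁻¹ ∑_{k,j} C k j · R_k Z_j`, so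
`Var G = n⁻² ∑ C_p C_q Cov(R_k Z_j, R_k' Z_j')`. Second-order uncorrelation factors each covariance
as `E[R_k R_k'] E[Z_j Z_j'] - (E R · E Z)²`, and the i.i.d. assumption gives
`E[R_k R_k'] = Var R · δ_kk' + (E R)²` (likewise for `Z`). Since `C` annihilates constant vectors
and `∑ C_kj² = n - 1`, only `(n - 1) Var R Var Z` survives.
-/

open MeasureTheory ProbabilityTheory Finset

noncomputable def centeringMatrix (ι : Type*) [Fintype ι] [DecidableEq ι] (i j : ι) : ℝ :=
  (if i = j then 1 else 0) - 1 / Fintype.card ι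

section CenteringMatrix

variable {ι : Type*} [Fintype ι] [DecidableEq ι]

theorem centeringMatrix_comm (i j : ι) : centeringMatrix ι i j = centeringMatrix ι j i := by
  simp only [centeringMatrix, eq_comm]

theorem sum_centeringMatrix_mul (x : ι → ℝ) (j : ι) :
    ∑ k, centeringMatrix ι k j * x k = x j - 1 / Fintype.card ι * ∑ k, x k := by
  simp [centeringMatrix, sub_mul, sum_sub_distrib, mul_sum]

theorem sum_sub_mean_mul_eq_sum_centeringMatrix (x y : ι → ℝ) :
    ∑ j, (x j - 1 / Fintype.card ι * ∑ k, x k) * y j =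
      ∑ p : ι × ι, centeringMatrix ι p.1 p.2 * (x p.1 * y p.2) := by
  rw [Fintype.sum_prod_type_right]
  refine sum_congr rfl fun j _ => ?_
  rw [← sum_centeringMatrix_mul, sum_mul]
  exact sum_congr rfl fun k _ => by ring

theorem sum_centeringMatrix_left (j : ι) : ∑ k, centeringMatrix ι k j = 0 := by
  have : Nonempty ι := ⟨j⟩
  have hcard : (Fintype.card ι : ℝ) ≠ 0 := Nat.cast_ne_zero.mpr Fintype.card_ne_zero
  simpa [hcard] using sum_centeringMatrix_mul (fun _ => (1 : ℝ)) j

theorem sum_centeringMatrix_mul_ite_add (α β : ℝ) (j k : ι) :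
    ∑ k', centeringMatrix ι k' j * ((if k = k' then α else 0) + β) =
      α * centeringMatrix ι k j := by
  simp only [mul_add, sum_add_distrib, mul_ite, mul_zero, sum_ite_eq, mem_univ, if_true,
    ← sum_mul, sum_centeringMatrix_left, zero_mul, add_zero]
  ring

theorem sum_centeringMatrix_sq [Nonempty ι] :
    ∑ p : ι × ι, centeringMatrix ι p.1 p.2 ^ 2 = Fintype.card ι - 1 := by
  have hcard : (Fintype.card ι : ℝ) ≠ 0 := Nat.cast_ne_zero.mpr Fintype.card_ne_zero
  have hcol (j : ι) : ∑ k, centeringMatrix ι k j ^ 2 = 1 - 1 / Fintype.card ι := by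
    simp_rw [sq, sum_centeringMatrix_mul, sum_centeringMatrix_left, centeringMatrix]
    simp
  simp only [Fintype.sum_prod_type_right, hcol, sum_const, card_univ, nsmul_eq_mul]
  field_simp

theorem sum_centeringMatrix_mul_ite_add_mul_ite_add (α β γ ε : ℝ) (p : ι × ι) :
    ∑ q : ι × ι, centeringMatrix ι q.1 q.2 *
      (((if p.1 = q.1 then α else 0) + β) * ((if p.2 = q.2 then γ else 0) + ε)) =
      α * γ * centeringMatrix ι p.1 p.2 := by
  calc _ = ∑ j, ((if p.2 = j then γ else 0) + ε) *
          ∑ k, centeringMatrix ι k j * ((if p.1 = k then α else 0) + β) := by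
        rw [Fintype.sum_prod_type_right]
        refine sum_congr rfl fun j _ => ?_
        rw [mul_sum]
        exact sum_congr rfl fun k _ => by ring
    _ = α * ∑ j, centeringMatrix ι j p.1 * ((if p.2 = j then γ else 0) + ε) := by
        rw [mul_sum]
        refine sum_congr rfl fun j _ => ?_
        rw [sum_centeringMatrix_mul_ite_add, centeringMatrix_comm p.1]
        ring
    _ = α * γ * centeringMatrix ι p.1 p.2 := by
        rw [sum_centeringMatrix_mul_ite_add, centeringMatrix_comm p.2, mul_assoc]

theorem sum_sum_centeringMatrix_mul_ite_add_mul_ite_add_sub [Nonempty ι] (α β γ ε : ℝ) :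
    ∑ p : ι × ι, ∑ q : ι × ι, centeringMatrix ι p.1 p.2 * centeringMatrix ι q.1 q.2 *
      (((if p.1 = q.1 then α else 0) + β) * ((if p.2 = q.2 then γ else 0) + ε) - β * ε) =
      (Fintype.card ι - 1) * α * γ := by
  have htotal : ∑ q : ι × ι, centeringMatrix ι q.1 q.2 = 0 := by
    simp [Fintype.sum_prod_type_right, sum_centeringMatrix_left]
  calc _ = ∑ p : ι × ι, centeringMatrix ι p.1 p.2 * (α * γ * centeringMatrix ι p.1 p.2) -
        β * ε * ((∑ p : ι × ι, centeringMatrix ι p.1 p.2) *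
          ∑ q : ι × ι, centeringMatrix ι q.1 q.2) := by
        simp_rw [← sum_centeringMatrix_mul_ite_add_mul_ite_add α β γ ε, sum_mul_sum, mul_sum,
          ← sum_sub_distrib]
        exact sum_congr rfl fun p _ => sum_congr rfl fun q _ => by ring
    _ = (Fintype.card ι - 1) * α * γ := by
        rw [htotal, ← sum_centeringMatrix_sq, sum_mul, sum_mul, mul_zero, mul_zero, sub_zero]
        exact sum_congr rfl fun p _ => by ring

end CenteringMatrix

section Moments

variable {Ω : Type*} [MeasurableSpace Ω] {μ : Measure Ω}

theorem ae_eq_zero_of_integral_mul_self_eq_zero {X : Ω → ℝ} (hX : MemLp X 2 μ)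
    (h : ∫ ω, X ω * X ω ∂μ = 0) : ∀ᵐ ω ∂μ, X ω = 0 := by
  have hint : Integrable (fun ω => X ω * X ω) μ := by simpa [pow_two] using hX.integrable_sq
  filter_upwards [(integral_eq_zero_iff_of_nonneg (fun ω => mul_self_nonneg (X ω)) hint).mp h]
    with ω hω using mul_self_eq_zero.mp hω

/-- If `X²Y²` were not integrable, its integral would take the junk value `0`, forcing
`E[X²] E[Y²] = 0`; but then `X` or `Y` vanishes a.e. and `X²Y²` is integrable after all. -/
theorem memLp_two_mul_of_covar_mul_self_eq_zero {X Y : Ω → ℝ} (hX : MemLp X 2 μ)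
    (hY : MemLp Y 2 μ) (h : covar μ (fun ω => X ω * X ω) (fun ω => Y ω * Y ω) = 0) :
    MemLp (fun ω => X ω * Y ω) 2 μ := by
  refine (memLp_two_iff_integrable_sq (f := fun ω => X ω * Y ω)
    (hX.aestronglyMeasurable.mul hY.aestronglyMeasurable)).mpr ?_
  by_contra hint
  have hsq : (fun ω => X ω * X ω * (Y ω * Y ω)) = fun ω => (X ω * Y ω) ^ 2 := by
    funext ω; ring
  rw [covar, hsq, integral_undef hint, zero_sub, neg_eq_zero] at h
  have hzero : (∀ᵐ ω ∂μ, X ω = 0) ∨ ∀ᵐ ω ∂μ, Y ω = 0 :=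
    (mul_eq_zero.mp h).imp (ae_eq_zero_of_integral_mul_self_eq_zero hX)
      (ae_eq_zero_of_integral_mul_self_eq_zero hY)
  refine hint (integrable_zero Ω ℝ μ |>.congr ?_)
  rcases hzero with h0 | h0 <;> filter_upwards [h0] with ω hω <;> simp [hω]

theorem integral_mul_eq_ite_variance_add_sq [IsProbabilityMeasure μ] {ι : Type*} [DecidableEq ι]
    {X : ι → Ω → ℝ} {Y : Ω → ℝ} (hY : MemLp Y 2 μ) (hident : ∀ i, IdentDistrib (X i) Y μ μ)
    (hindep : Pairwise fun i j => IndepFun (X i) (X j) μ) (i j : ι) :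
    ∫ ω, X i ω * X j ω ∂μ = (if i = j then Var[Y; μ] else 0) + μ[Y] ^ 2 := by
  split_ifs with h
  · subst h
    rw [variance_eq_sub hY, sub_add_cancel]
    exact ((hident i).comp (measurable_id.mul measurable_id)).integral_eq.trans
      (integral_congr_ae (.of_forall fun ω => (sq (Y ω)).symm))
  · rw [(hindep h).integral_fun_mul_eq_mul_integral
      (hident i).aemeasurable_fst.aestronglyMeasurable
      (hident j).aemeasurable_fst.aestronglyMeasurable,
      (hident i).integral_eq, (hident j).integral_eq]
    ring

theorem covariance_mul_mul_of_covar_eq_zero_s4 [IsProbabilityMeasure μ] {A B C D : Ω → ℝ}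
    (hAB : MemLp (fun ω => A ω * B ω) 2 μ) (hCD : MemLp (fun ω => C ω * D ω) 2 μ)
    (hAB0 : covar μ A B = 0) (hCD0 : covar μ C D = 0)
    (hACBD : covar μ (fun ω => A ω * C ω) (fun ω => B ω * D ω) = 0) :
    cov[fun ω => A ω * B ω, fun ω => C ω * D ω; μ] =
      (∫ ω, A ω * C ω ∂μ) * (∫ ω, B ω * D ω ∂μ) - μ[A] * μ[B] * (μ[C] * μ[D]) := by
  rw [covariance_eq_sub hAB hCD]
  unfold covar at hAB0 hCD0 hACBD
  have hprod : μ[(fun ω => A ω * B ω) * fun ω => C ω * D ω] =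
      ∫ ω, A ω * C ω * (B ω * D ω) ∂μ :=
    integral_congr_ae (.of_forall fun ω => by simp only [Pi.mul_apply]; ring)
  rw [hprod, sub_eq_zero.mp hACBD, sub_eq_zero.mp hAB0, sub_eq_zero.mp hCD0]

theorem variance_sum_centeringMatrix_mul [IsProbabilityMeasure μ] {ι : Type*} [Fintype ι]
    [DecidableEq ι] [Nonempty ι] {X Y : ι → Ω → ℝ} {a b α γ : ℝ}
    (hXY : ∀ k j, MemLp (fun ω => X k ω * Y j ω) 2 μ)
    (hX : ∀ k, μ[X k] = a) (hY : ∀ j, μ[Y j] = b)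
    (hXX : ∀ k k', ∫ ω, X k ω * X k' ω ∂μ = (if k = k' then α else 0) + a ^ 2)
    (hYY : ∀ j j', ∫ ω, Y j ω * Y j' ω ∂μ = (if j = j' then γ else 0) + b ^ 2)
    (hcov1 : ∀ j k, covar μ (X k) (Y j) = 0)
    (hcov2 : ∀ j j' k k', covar μ (fun ω => X k ω * X k' ω) (fun ω => Y j ω * Y j' ω) = 0) :
    Var[fun ω => ∑ p : ι × ι, centeringMatrix ι p.1 p.2 * (X p.1 ω * Y p.2 ω); μ] =
      (Fintype.card ι - 1) * α * γ := by
  rw [variance_fun_sum (X := fun (p : ι × ι) ω => centeringMatrix ι p.1 p.2 * (X p.1 ω * Y p.2 ω))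
      fun p => (hXY p.1 p.2).const_mul _,
    ← sum_sum_centeringMatrix_mul_ite_add_mul_ite_add_sub α (a ^ 2) γ (b ^ 2)]
  refine sum_congr rfl fun p _ => sum_congr rfl fun q _ => ?_
  rw [covariance_const_mul_left, covariance_const_mul_right,
    covariance_mul_mul_of_covar_eq_zero_s4 (hXY _ _) (hXY _ _) (hcov1 _ _) (hcov1 _ _)
      (hcov2 _ _ _ _), hXX, hYY, hX, hY, hX, hY]
  ring

end Moments

/-- **Dr. GRPO gradient variance (continuous reward).** -/
theorem drgrpo_variance_continuous
    {Ω : Type*} [MeasurableSpace Ω] (μ : Measure Ω) [IsProbabilityMeasure μ]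
    (n : ℕ) (hn : 2 ≤ n)
    (R Z : Ω → ℝ) (Rv Zv : Fin n → Ω → ℝ)
    (hR2 : MemLp R 2 μ) (hZ2 : MemLp Z 2 μ)
    (hident : ∀ i, IdentDistrib (fun ω => (Rv i ω, Zv i ω)) (fun ω => (R ω, Z ω)) μ μ)
    (hindep : iIndepFun (fun i ω => (Rv i ω, Zv i ω)) μ)
    (hcov1 : ∀ j k, covar μ (Rv k) (Zv j) = 0)
    (hcov2 : ∀ j j' k k', covar μ (fun ω => Rv k ω * Rv k' ω)
      (fun ω => Zv j ω * Zv j' ω) = 0) :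
    variance (fun ω =>
        (1 / (n : ℝ)) * ∑ j, (Rv j ω - (1 / (n : ℝ)) * ∑ k, Rv k ω) * Zv j ω) μ
      = ((n : ℝ) - 1) / (n : ℝ) ^ 2 * variance Z μ * variance R μ := by
  have : Nonempty (Fin n) := ⟨⟨0, by omega⟩⟩
  have hRid (i : Fin n) : IdentDistrib (Rv i) R μ μ := (hident i).comp measurable_fst
  have hZid (i : Fin n) : IdentDistrib (Zv i) Z μ μ := (hident i).comp measurable_snd
  have hRindep : Pairwise fun i j => IndepFun (Rv i) (Rv j) μ := fun i j hij =>
    (hindep.indepFun hij).comp measurable_fst measurable_fst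
  have hZindep : Pairwise fun i j => IndepFun (Zv i) (Zv j) μ := fun i j hij =>
    (hindep.indepFun hij).comp measurable_snd measurable_snd
  have hRZ (k j : Fin n) : MemLp (fun ω => Rv k ω * Zv j ω) 2 μ :=
    memLp_two_mul_of_covar_mul_self_eq_zero ((hRid k).symm.memLp_snd hR2)
      ((hZid j).symm.memLp_snd hZ2) (hcov2 j j k k)
  have hG : (fun ω => (1 / (n : ℝ)) * ∑ j, (Rv j ω - (1 / (n : ℝ)) * ∑ k, Rv k ω) * Zv j ω) =
      fun ω => (1 / (n : ℝ)) *
        ∑ p : Fin n × Fin n, centeringMatrix (Fin n) p.1 p.2 * (Rv p.1 ω * Zv p.2 ω) := by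
    funext ω
    simpa using congrArg ((1 / (n : ℝ)) * ·)
      (sum_sub_mean_mul_eq_sum_centeringMatrix (Rv · ω) (Zv · ω))
  rw [hG, variance_const_mul, variance_sum_centeringMatrix_mul hRZ
    (fun k => (hRid k).integral_eq) (fun j => (hZid j).integral_eq)
    (integral_mul_eq_ite_variance_add_sq hR2 hRid hRindep)
    (integral_mul_eq_ite_variance_add_sq hZ2 hZid hZindep) hcov1 hcov2, Fintype.card_fin]
  ring
end

section
/- Let n ≥ 2 be an integer. Let (R_1,Z_1),…,(R_n,Z_n) be i.i.d. copies of a pair (R,Z) of square-integrable real random variables satisfying Cov(R_k, Z_j) = 0 for all j,k and Cov(R_k R_{k'}, Z_j Z_{j'}) = 0 for all j,j',k,k'. Write μ_Z = E[Z] and σ_Z² = Var(Z). Then E[(1/(n²(n−1)²)) (Σ_{j=1}^n Σ_{k=1,k≠j}^n R_k Z_j)²] = E[R²] ((1/n) μ_Z² + (1/(n(n−1))) σ_Z²) + (E[R])² (((n−1)/n) μ_Z² + ((n−2)/(n(n−1))) σ_Z²). -/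
/-!
Expanding the square, `E[S²]` for `S = ∑_{k ≠ j} R_k Z_j` is the sum, over pairs of
off-diagonal index pairs `(j, k)` and `(j', k')`, of `E[R_k R_k' Z_j Z_j']`. The second
uncorrelation condition splits each term as `E[R_k R_k'] E[Z_j Z_j']`, and by independence
and identical distribution `E[R_k R_k']` is `E[R²]` when `k = k'` and `(E R)²` otherwise
(likewise for `Z`). The identity is then a count of the pairs of off-diagonal pairs sharing
their first or second coordinate. The expansion is legitimate because each `R_k Z_j` with
`k ≠ j` is a product of independent square-integrable variables, hence square-integrable.
-/

open MeasureTheory ProbabilityTheory Finset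

section Moments

variable {Ω : Type*} [MeasurableSpace Ω] {μ : Measure Ω}

lemma ProbabilityTheory.IndepFun.memLp_two_mul {X Y : Ω → ℝ} (hXY : IndepFun X Y μ)
    (hX : MemLp X 2 μ) (hY : MemLp Y 2 μ) : MemLp (X * Y) 2 μ := by
  refine (memLp_two_iff_integrable_sq (hX.1.mul hY.1)).2 ?_
  have hsq : IndepFun (fun ω => X ω ^ 2) (fun ω => Y ω ^ 2) μ :=
    hXY.comp (measurable_id.pow_const 2) (measurable_id.pow_const 2)
  simpa only [Pi.mul_def, mul_pow] using hsq.integrable_mul hX.integrable_sq hY.integrable_sq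

lemma ProbabilityTheory.integral_mul_eq_ite {ι : Type*} [DecidableEq ι] {X : ι → Ω → ℝ}
    {X₀ : Ω → ℝ} (hident : ∀ i, IdentDistrib (X i) X₀ μ μ)
    (hindep : Pairwise fun i j => IndepFun (X i) (X j) μ) (i j : ι) :
    ∫ ω, X i ω * X j ω ∂μ = if i = j then ∫ ω, X₀ ω ^ 2 ∂μ else (∫ ω, X₀ ω ∂μ) ^ 2 := by
  split_ifs with hij
  · subst hij
    simp_rw [← sq]
    exact ((hident i).comp (by fun_prop : Measurable fun x : ℝ => x ^ 2)).integral_eq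
  · rw [(hindep hij).integral_fun_mul_eq_mul_integral (hident i).aestronglyMeasurable_fst
      (hident j).aestronglyMeasurable_fst, (hident i).integral_eq, (hident j).integral_eq, sq]

lemma MeasureTheory.integral_sq_finsetSum {ι : Type*} (s : Finset ι) {X : ι → Ω → ℝ}
    (hX : ∀ i ∈ s, MemLp (X i) 2 μ) :
    ∫ ω, (∑ i ∈ s, X i ω) ^ 2 ∂μ = ∑ i ∈ s, ∑ j ∈ s, ∫ ω, X i ω * X j ω ∂μ := by
  have hint : ∀ i ∈ s, ∀ j ∈ s, Integrable (fun ω => X i ω * X j ω) μ :=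
    fun i hi j hj => (hX i hi).integrable_mul (hX j hj)
  simp_rw [sq, sum_mul_sum]
  rw [integral_finsetSum s fun i hi => integrable_finsetSum s (hint i hi)]
  exact sum_congr rfl fun i hi => integral_finsetSum s (hint i hi)

end Moments

section Counting

variable {ι R : Type*} [Fintype ι] [DecidableEq ι] [CommRing R]

lemma Finset.sum_ite_eq_mul_ite_eq {i j : ι} (hij : i ≠ j) (u v u' v' : R) :
    ∑ x, (if i = x then v else u) * (if j = x then v' else u')
      = v * u' + u * v' + (Fintype.card ι - 2) * (u * u') := by
  have split : ∀ x, (if i = x then v else u) * (if j = x then v' else u')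
      = u * u' + (if i = x then (v - u) * u' else 0) + (if j = x then u * (v' - u') else 0) := by
    intro x
    by_cases hi : i = x <;> by_cases hj : j = x
    · exact absurd (hi.trans hj.symm) hij
    all_goals simp only [hi, hj, if_true, if_false]; ring
  simp only [split, sum_add_distrib, sum_ite_eq, mem_univ, if_true, sum_const, card_univ,
    nsmul_eq_mul]
  ring

lemma Finset.sum_erase_ite_eq (i j : ι) (u v : R) :
    ∑ k ∈ univ.erase j, (if i = k then v else u)
      = if i = j then (Fintype.card ι - 1) * u else v + (Fintype.card ι - 2) * u := by
  have split : ∀ k, (if i = k then v else u) = u + if i = k then v - u else 0 := fun k => by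
    split_ifs <;> ring
  rw [sum_erase_eq_sub (mem_univ j)]
  simp only [split, sum_add_distrib, sum_ite_eq, mem_univ, if_true, sum_const, card_univ,
    nsmul_eq_mul]
  split_ifs <;> ring

lemma Finset.sum_offDiag_sum_offDiag_ite_mul_ite (a b c d : R) :
    ∑ j : ι, ∑ k ∈ univ.erase j, ∑ j' : ι, ∑ k' ∈ univ.erase j',
      (if k = k' then b else a) * (if j = j' then d else c)
    = Fintype.card ι * (Fintype.card ι - 1) * ((Fintype.card ι - 1) * a * c
        + (b + (Fintype.card ι - 2) * a) * (d + (Fintype.card ι - 2) * c)) := by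
  have inner : ∀ j, ∀ k ∈ univ.erase j, ∑ j' : ι, ∑ k' ∈ univ.erase j',
      (if k = k' then b else a) * (if j = j' then d else c)
      = (Fintype.card ι - 1) * a * c
        + (b + (Fintype.card ι - 2) * a) * (d + (Fintype.card ι - 2) * c) := by
    intro j k hk
    simp only [← sum_mul, sum_erase_ite_eq]
    rw [sum_ite_eq_mul_ite_eq (ne_of_mem_erase hk)]
    ring
  simp only [sum_congr rfl fun j _ => sum_congr rfl (inner j), sum_const, nsmul_eq_mul,
    cast_card_erase_of_mem (mem_univ _), card_univ]
  ring

end Counting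

theorem rloo_moment_C2_identity_general
    {Ω : Type*} [MeasurableSpace Ω] (μ : Measure Ω) [IsProbabilityMeasure μ]
    (n : ℕ) (hn : 2 ≤ n)
    (R Z : Ω → ℝ) (Rv Zv : Fin n → Ω → ℝ)
    (hR2 : MemLp R 2 μ) (hZ2 : MemLp Z 2 μ)
    (hident : ∀ i, IdentDistrib (fun ω => (Rv i ω, Zv i ω)) (fun ω => (R ω, Z ω)) μ μ)
    (hindep : iIndepFun (fun i ω => (Rv i ω, Zv i ω)) μ)
    (hcov2 : ∀ j j' k k', covar μ (fun ω => Rv k ω * Rv k' ω)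
      (fun ω => Zv j ω * Zv j' ω) = 0)
    :
    (∫ ω, (1 / ((n : ℝ) ^ 2 * ((n : ℝ) - 1) ^ 2))
        * (∑ j, ∑ k ∈ Finset.univ.erase j, Rv k ω * Zv j ω) ^ 2 ∂μ)
      = (∫ ω, R ω ^ 2 ∂μ)
          * ((1 / (n : ℝ)) * (∫ ω, Z ω ∂μ) ^ 2
            + (1 / ((n : ℝ) * ((n : ℝ) - 1))) * variance Z μ)
        + (∫ ω, R ω ∂μ) ^ 2
          * (((n : ℝ) - 1) / (n : ℝ) * (∫ ω, Z ω ∂μ) ^ 2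
            + ((n : ℝ) - 2) / ((n : ℝ) * ((n : ℝ) - 1)) * variance Z μ) := by
  have hR : ∀ i, IdentDistrib (Rv i) R μ μ := fun i => (hident i).comp measurable_fst
  have hZ : ∀ i, IdentDistrib (Zv i) Z μ μ := fun i => (hident i).comp measurable_snd
  have hRR : Pairwise fun i j => IndepFun (Rv i) (Rv j) μ := fun i j hij =>
    (hindep.indepFun hij).comp measurable_fst measurable_fst
  have hZZ : Pairwise fun i j => IndepFun (Zv i) (Zv j) μ := fun i j hij =>
    (hindep.indepFun hij).comp measurable_snd measurable_snd
  have hterm : ∀ p ∈ univ.sigma fun j => univ.erase j,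
      MemLp (fun ω => Rv p.2 ω * Zv p.1 ω) 2 μ := fun p hp =>
    ((hindep.indepFun (ne_of_mem_erase (mem_sigma.1 hp).2)).comp measurable_fst
      measurable_snd).memLp_two_mul ((hR _).memLp_iff.2 hR2) ((hZ _).memLp_iff.2 hZ2)
  have hmoment : ∀ j k j' k', ∫ ω, Rv k ω * Zv j ω * (Rv k' ω * Zv j' ω) ∂μ
      = (if k = k' then ∫ ω, R ω ^ 2 ∂μ else (∫ ω, R ω ∂μ) ^ 2)
        * (if j = j' then ∫ ω, Z ω ^ 2 ∂μ else (∫ ω, Z ω ∂μ) ^ 2) := by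
    intro j k j' k'
    rw [← integral_mul_eq_ite hR hRR, ← integral_mul_eq_ite hZ hZZ, ← sub_eq_zero,
      ← hcov2 j j' k k']
    simp only [covar, mul_mul_mul_comm]
  have hsq : ∫ ω, (∑ j, ∑ k ∈ univ.erase j, Rv k ω * Zv j ω) ^ 2 ∂μ
      = ∑ j, ∑ k ∈ univ.erase j, ∑ j', ∑ k' ∈ univ.erase j',
          ∫ ω, Rv k ω * Zv j ω * (Rv k' ω * Zv j' ω) ∂μ := by
    simpa only [sum_sigma] using integral_sq_finsetSum _ hterm
  have hn0 : (n : ℝ) ≠ 0 := Nat.cast_ne_zero.2 (by omega)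
  have hn1 : (n : ℝ) - 1 ≠ 0 := sub_ne_zero.2 (by exact_mod_cast (by omega : n ≠ 1))
  rw [integral_const_mul, hsq]
  simp only [hmoment, sum_offDiag_sum_offDiag_ite_mul_ite, Fintype.card_fin,
    variance_eq_sub hZ2, Pi.pow_apply]
  field_simp
  ring

theorem rloo_moment_C2_identity
    {Ω : Type*} [MeasurableSpace Ω] (μ : Measure Ω) [IsProbabilityMeasure μ]
    (n : ℕ) (hn : 2 ≤ n)
    (R Z : Ω → ℝ) (Rv Zv : Fin n → Ω → ℝ)
    (hR2 : MemLp R 2 μ) (hZ2 : MemLp Z 2 μ)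
    (hident : ∀ i, IdentDistrib (fun ω => (Rv i ω, Zv i ω)) (fun ω => (R ω, Z ω)) μ μ)
    (hindep : iIndepFun (fun i ω => (Rv i ω, Zv i ω)) μ)
    (hcov1 : ∀ j k, covar μ (Rv k) (Zv j) = 0)
    (hcov2 : ∀ j j' k k', covar μ (fun ω => Rv k ω * Rv k' ω)
      (fun ω => Zv j ω * Zv j' ω) = 0)
    :
    (∫ ω, (1 / ((n : ℝ) ^ 2 * ((n : ℝ) - 1) ^ 2))
        * (∑ j, ∑ k ∈ Finset.univ.erase j, Rv k ω * Zv j ω) ^ 2 ∂μ)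
      = (∫ ω, R ω ^ 2 ∂μ)
          * ((1 / (n : ℝ)) * (∫ ω, Z ω ∂μ) ^ 2
            + (1 / ((n : ℝ) * ((n : ℝ) - 1))) * variance Z μ)
        + (∫ ω, R ω ∂μ) ^ 2
          * (((n : ℝ) - 1) / (n : ℝ) * (∫ ω, Z ω ∂μ) ^ 2
            + ((n : ℝ) - 2) / ((n : ℝ) * ((n : ℝ) - 1)) * variance Z μ) :=
  rloo_moment_C2_identity_general μ n hn R Z Rv Zv hR2 hZ2 hident hindep hcov2
end

section
/- Fix an integer B ≥ 1, reals L and U with 3 ≤ L < U, and positive reals a_1,…,a_B. For each q, define n_q⋆ : (0,∞) → [L, U] by n_q⋆(λ) = U if λ ≤ a_q/(U−1)², n_q⋆(λ) = 1 + √(a_q/λ) if a_q/(U−1)² < λ < a_q/(L−1)², and n_q⋆(λ) = L if λ ≥ a_q/(L−1)². Then each n_q⋆ is non-increasing and continuous on (0,∞), n_q⋆(λ) = U for all sufficiently small λ > 0 and n_q⋆(λ) = L for all sufficiently large λ; hence S(λ) = Σ_{q=1}^B n_q⋆(λ) is a continuous non-increasing function on (0,∞) taking all values in [B·L, B·U],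 and for every C with B·L ≤ C ≤ B·U there exists λ⋆ > 0 with S(λ⋆) = C. -/
open Finset

lemma rlooNstar_eq_clamp {a L U lam : ℝ} (ha : 0 < a) (hL : 3 ≤ L) (hLU : L < U)
    (hlam : 0 < lam) :
    rlooNstar a L U lam = max L (min U (1 + Real.sqrt (a / lam))) := by
  have hL1 : (0:ℝ) < L - 1 := by linarith
  have hU1 : (0:ℝ) < U - 1 := by linarith
  have halam : 0 < a / lam := div_pos ha hlam
  unfold rlooNstar
  split_ifs with h1 h2
  · have h : (U - 1) ^ 2 ≤ a / lam := by
      rw [le_div_iff₀ hlam]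
      rw [le_div_iff₀ (by positivity)] at h1
      nlinarith
    have hs : U - 1 ≤ Real.sqrt (a / lam) := by
      rw [show U - 1 = Real.sqrt ((U - 1) ^ 2) from (Real.sqrt_sq hU1.le).symm]
      exact Real.sqrt_le_sqrt h
    rw [min_eq_left (by linarith), max_eq_right hLU.le]
  · push_neg at h1
    have hlt : a / lam < (U - 1) ^ 2 := by
      rw [div_lt_iff₀ hlam]
      rw [div_lt_iff₀ (by positivity)] at h1
      nlinarith
    have hgt : (L - 1) ^ 2 < a / lam := by
      rw [lt_div_iff₀ hlam]
      rw [lt_div_iff₀ (by positivity)] at h2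
      nlinarith
    have hs1 : Real.sqrt (a / lam) < U - 1 := by
      rw [show U - 1 = Real.sqrt ((U - 1) ^ 2) from (Real.sqrt_sq hU1.le).symm]
      exact Real.sqrt_lt_sqrt (by positivity) hlt
    have hs2 : L - 1 < Real.sqrt (a / lam) := by
      rw [show L - 1 = Real.sqrt ((L - 1) ^ 2) from (Real.sqrt_sq hL1.le).symm]
      exact Real.sqrt_lt_sqrt (by positivity) hgt
    rw [min_eq_right (by linarith), max_eq_right (by linarith)]
  · push_neg at h2
    have hle : a / lam ≤ (L - 1) ^ 2 := by
      rw [div_le_iff₀ hlam]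
      rw [div_le_iff₀ (by positivity)] at h2
      nlinarith
    have hs : Real.sqrt (a / lam) ≤ L - 1 := by
      rw [show L - 1 = Real.sqrt ((L - 1) ^ 2) from (Real.sqrt_sq hL1.le).symm]
      exact Real.sqrt_le_sqrt hle
    rw [min_eq_right (by linarith), max_eq_left (by linarith)]

lemma clamp_antitoneOn (a L U : ℝ) (ha : 0 < a) :
    AntitoneOn (fun lam => max L (min U (1 + Real.sqrt (a / lam)))) (Set.Ioi 0) := by
  intro x hx y hy hxy
  simp only
  have : Real.sqrt (a / y) ≤ Real.sqrt (a / x) :=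
    Real.sqrt_le_sqrt (div_le_div_of_nonneg_left ha.le hx hxy)
  exact max_le_max le_rfl (min_le_min le_rfl (by linarith))

lemma clamp_continuousOn (a L U : ℝ) :
    ContinuousOn (fun lam => max L (min U (1 + Real.sqrt (a / lam)))) (Set.Ioi 0) := by
  have hdiv : ContinuousOn (fun lam : ℝ => a / lam) (Set.Ioi 0) :=
    continuousOn_const.div continuousOn_id fun x hx => ne_of_gt hx
  have hs : ContinuousOn (fun lam : ℝ => Real.sqrt (a / lam)) (Set.Ioi 0) :=
    Real.continuous_sqrt.comp_continuousOn hdiv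
  exact (continuous_const.max (continuous_const.min (continuous_const.add
    continuous_id))).comp_continuousOn hs

/-- **Properties of the RLOO waterfilling map and of `S(λ) = Σ_q n_q⋆(λ)` on `(0,∞)`.** -/
theorem rloo_S_properties (B : ℕ) (hB : 1 ≤ B) (L U : ℝ)
    (hL : 3 ≤ L) (hLU : L < U)
    (a : Fin B → ℝ) (ha : ∀ q, 0 < a q) :
    (∀ q, ∀ lam : ℝ, 0 < lam → rlooNstar (a q) L U lam ∈ Set.Icc L U) ∧
    (∀ q, AntitoneOn (fun lam => rlooNstar (a q) L U lam) (Set.Ioi 0)) ∧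
    (∀ q, ContinuousOn (fun lam => rlooNstar (a q) L U lam) (Set.Ioi 0)) ∧
    (∀ q, ∃ lam0 : ℝ, 0 < lam0 ∧ ∀ lam, 0 < lam → lam ≤ lam0 →
      rlooNstar (a q) L U lam = U) ∧
    (∀ q, ∃ lam1 : ℝ, 0 < lam1 ∧ ∀ lam, lam1 ≤ lam → rlooNstar (a q) L U lam = L) ∧
    ContinuousOn (fun lam => ∑ q, rlooNstar (a q) L U lam) (Set.Ioi 0) ∧
    AntitoneOn (fun lam => ∑ q, rlooNstar (a q) L U lam) (Set.Ioi 0) ∧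
    (∀ C : ℝ, (B : ℝ) * L ≤ C → C ≤ (B : ℝ) * U →
      ∃ lamStar : ℝ, 0 < lamStar ∧ (∑ q, rlooNstar (a q) L U lamStar) = C) := by
  have hL1 : (0:ℝ) < L - 1 := by linarith
  have hU1 : (0:ℝ) < U - 1 := by linarith
  have hEq : ∀ q, Set.EqOn (fun lam => rlooNstar (a q) L U lam)
      (fun lam => max L (min U (1 + Real.sqrt (a q / lam)))) (Set.Ioi 0) := by
    intro q lam hlam
    exact rlooNstar_eq_clamp (ha q) hL hLU hlam
  have mem : ∀ q, ∀ lam : ℝ, 0 < lam → rlooNstar (a q) L U lam ∈ Set.Icc L U := by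
    intro q lam hlam
    rw [rlooNstar_eq_clamp (ha q) hL hLU hlam]
    constructor
    · exact le_max_left _ _
    · exact max_le hLU.le (min_le_left _ _)
  have anti : ∀ q, AntitoneOn (fun lam => rlooNstar (a q) L U lam) (Set.Ioi 0) := by
    intro q
    exact AntitoneOn.congr (clamp_antitoneOn (a q) L U (ha q)) (hEq q).symm
  have cont : ∀ q, ContinuousOn (fun lam => rlooNstar (a q) L U lam) (Set.Ioi 0) := by
    intro q
    exact ContinuousOn.congr (clamp_continuousOn (a q) L U) (hEq q)
  have smallU : ∀ q, ∀ lam, 0 < lam → lam ≤ a q / (U - 1) ^ 2 →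
      rlooNstar (a q) L U lam = U := by
    intro q lam _ h
    simp [rlooNstar, h]
  have bigL : ∀ q, ∀ lam, a q / (L - 1) ^ 2 ≤ lam → rlooNstar (a q) L U lam = L := by
    intro q lam h
    have ht : a q / (U - 1) ^ 2 < a q / (L - 1) ^ 2 := by
      apply div_lt_div_of_pos_left (ha q) (by positivity)
      nlinarith
    rw [rlooNstar, if_neg (by linarith), if_neg (by linarith)]
  have contS : ContinuousOn (fun lam => ∑ q, rlooNstar (a q) L U lam) (Set.Ioi 0) :=
    continuousOn_finset_sum _ fun q _ => cont q
  have antiS : AntitoneOn (fun lam => ∑ q, rlooNstar (a q) L U lam) (Set.Ioi 0) := by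
    intro x hx y hy hxy
    exact Finset.sum_le_sum fun q _ => anti q hx hy hxy
  refine ⟨mem, anti, cont, ?_, ?_, contS, antiS, ?_⟩
  · intro q
    exact ⟨a q / (U - 1) ^ 2, div_pos (ha q) (pow_pos hU1 2), fun lam h1 h2 => smallU q lam h1 h2⟩
  · intro q
    exact ⟨a q / (L - 1) ^ 2, div_pos (ha q) (pow_pos hL1 2), fun lam h => bigL q lam h⟩
  · intro C hC1 hC2
    haveI : Nonempty (Fin B) := ⟨⟨0, hB⟩⟩
    set lo : ℝ := Finset.univ.inf' Finset.univ_nonempty (fun q => a q / (U - 1) ^ 2) with hlo_def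
    set hi : ℝ := Finset.univ.sup' Finset.univ_nonempty (fun q => a q / (L - 1) ^ 2) with hhi_def
    have hlo_pos : 0 < lo := by
      rw [hlo_def, Finset.lt_inf'_iff]
      intro q _
      exact div_pos (ha q) (pow_pos hU1 2)
    have hlo_le : ∀ q, lo ≤ a q / (U - 1) ^ 2 := fun q =>
      Finset.inf'_le (f := fun q => a q / (U - 1) ^ 2) (Finset.mem_univ q)
    have hhi_ge : ∀ q, a q / (L - 1) ^ 2 ≤ hi := fun q =>
      Finset.le_sup' (f := fun q => a q / (L - 1) ^ 2) (Finset.mem_univ q)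
    have hlohi : lo ≤ hi := by
      have q0 : Fin B := ⟨0, hB⟩
      have h1 := hlo_le q0
      have h2 := hhi_ge q0
      have ht : a q0 / (U - 1) ^ 2 < a q0 / (L - 1) ^ 2 := by
        apply div_lt_div_of_pos_left (ha q0) (by positivity)
        nlinarith
      linarith
    have hhi_pos : 0 < hi := lt_of_lt_of_le hlo_pos hlohi
    have hIcc : Set.Icc lo hi ⊆ Set.Ioi 0 := fun x hx => lt_of_lt_of_le hlo_pos hx.1
    have hSlo : (∑ q, rlooNstar (a q) L U lo) = (B : ℝ) * U := by
      rw [Finset.sum_congr rfl fun q _ => smallU q lo hlo_pos (hlo_le q)]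
      simp [mul_comm]
    have hShi : (∑ q, rlooNstar (a q) L U hi) = (B : ℝ) * L := by
      rw [Finset.sum_congr rfl fun q _ => bigL q hi (hhi_ge q)]
      simp [mul_comm]
    have := intermediate_value_Icc' hlohi (contS.mono hIcc)
    have hCmem : C ∈ Set.Icc ((fun lam => ∑ q, rlooNstar (a q) L U lam) hi)
        ((fun lam => ∑ q, rlooNstar (a q) L U lam) lo) := by
      simp only [hSlo, hShi]
      exact ⟨hC1, hC2⟩
    obtain ⟨x, hx, hxC⟩ := this hCmem
    exact ⟨x, lt_of_lt_of_le hlo_pos hx.1, hxC⟩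
end
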